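/- arXiv:math/0610900 — 4 statements merged into one kernel-verified Lean document; each statement's English description precedes it below -/
import Mathlib

section
/- Let K be a field, A a K-algebra, X a right A-module and Y a left A-module, M a left A-module, and V ⊆ X, W ⊆ Y, U ⊆ M finite-dimensional K-subspaces. If 1_A lies in the image of V ⊗ W under a balanced multiplication map X × Y → A, then dim_K(U) ≤ dim_K(V) · dim_K(WU), where WU denotes the image of W ⊗ U in Y ⊗_A M under the canonical map composed with the module action identifications. -/
/-- Let `A` be a `K`-algebra, `X` a left `A`-module, `Y` a right `A`-module,
`M` a left `A`-module, `μ : X × Y → A` a balanced bilinear multiplication map,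
`P` a vector space playing the role of `Y ⊗_A M` with the canonical balanced
bilinear map `β : Y × M → P`, and `α : X × P → M` the identification coming from
the module actions, so that `α x (β y m) = μ x y • m`. If `1_A` lies in the span
of `μ(V × W)` for finite-dimensional subspaces `V ⊆ X`, `W ⊆ Y`, then for any
finite-dimensional subspace `U ⊆ M`,
`dim_K U ≤ dim_K V * dim_K (W·U)` where `W·U` is the span of `β(W × U)` in `P`. -/
theorem finrank_le_of_one_mem_span_mul
    (K A X Y M P : Type*) [Field K] [Ring A] [Algebra K A]
    [AddCommGroup X] [Module K X] [Module A X] [IsScalarTower K A X]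
    [AddCommGroup Y] [Module K Y] [Module Aᵐᵒᵖ Y] [SMulCommClass K Aᵐᵒᵖ Y]
    [AddCommGroup M] [Module K M] [Module A M] [IsScalarTower K A M]
    [AddCommGroup P] [Module K P]
    (μ : X →ₗ[K] Y →ₗ[K] A) (β : Y →ₗ[K] M →ₗ[K] P) (α : X →ₗ[K] P →ₗ[K] M)
    (hμl : ∀ (a : A) (x : X) (y : Y), μ (a • x) y = a * μ x y)
    (hμr : ∀ (a : A) (x : X) (y : Y), μ x (MulOpposite.op a • y) = μ x y * a)
    (hβbal : ∀ (a : A) (y : Y) (m : M), β (MulOpposite.op a • y) m = β y (a • m))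
    (hα : ∀ (x : X) (y : Y) (m : M), α x (β y m) = μ x y • m)
    (V : Submodule K X) (W : Submodule K Y) (U : Submodule K M)
    (hV : FiniteDimensional K V) (hW : FiniteDimensional K W)
    (hU : FiniteDimensional K U)
    (hone : (1 : A) ∈ Submodule.span K {z : A | ∃ x ∈ V, ∃ y ∈ W, z = μ x y}) :
    Module.finrank K U ≤ Module.finrank K V *
      Module.finrank K (Submodule.span K {z : P | ∃ y ∈ W, ∃ m ∈ U, z = β y m}) := by

  set Q : Submodule K P := Submodule.span K {z : P | ∃ y ∈ W, ∃ m ∈ U, z = β y m} with hQ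
  haveI : FiniteDimensional K Q := by
    let G : TensorProduct K W U →ₗ[K] P :=
      TensorProduct.lift ((β.comp W.subtype).compl₂ U.subtype)
    have hQle : Q ≤ LinearMap.range G := by
      rw [hQ, Submodule.span_le]
      rintro _ ⟨y, hy, m, hm, rfl⟩
      exact ⟨(⟨y, hy⟩ : W) ⊗ₜ[K] (⟨m, hm⟩ : U), rfl⟩
    exact Submodule.finiteDimensional_of_le hQle
  -- bilinear map V × Q → M
  let b : V →ₗ[K] Q →ₗ[K] M := (α.comp V.subtype).compl₂ Q.subtype
  let F : TensorProduct K V Q →ₗ[K] M := TensorProduct.lift b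
  have hUF : U ≤ LinearMap.range F := by
    intro u hu
    -- the map a ↦ a • u
    let g : A →ₗ[K] M :=
      { toFun := fun a => a • u
        map_add' := fun a b => add_smul a b u
        map_smul' := fun k a => by simp [smul_assoc] }
    have h1 : g 1 ∈ Submodule.map g
        (Submodule.span K {z : A | ∃ x ∈ V, ∃ y ∈ W, z = μ x y}) :=
      ⟨1, hone, rfl⟩
    rw [Submodule.map_span] at h1
    have hle : Submodule.span K (g '' {z : A | ∃ x ∈ V, ∃ y ∈ W, z = μ x y}) ≤
        LinearMap.range F := by
      rw [Submodule.span_le]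
      rintro _ ⟨z, ⟨x, hx, y, hy, rfl⟩, rfl⟩
      have hq : β y u ∈ Q := Submodule.subset_span ⟨y, hy, u, hu, rfl⟩
      refine ⟨(⟨x, hx⟩ : V) ⊗ₜ[K] (⟨β y u, hq⟩ : Q), ?_⟩
      show b ⟨x, hx⟩ ⟨β y u, hq⟩ = μ x y • u
      simpa [b] using hα x y u
    have : g 1 ∈ LinearMap.range F := hle h1
    simpa [g] using this
  calc Module.finrank K U ≤ Module.finrank K (LinearMap.range F) :=
        Submodule.finrank_mono hUF
    _ ≤ Module.finrank K (TensorProduct K V Q) := LinearMap.finrank_range_le F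
    _ = Module.finrank K V * Module.finrank K Q := Module.finrank_tensorProduct
end

section
/- Let A and B be Morita equivalent finitely generated K-algebras over a field K. Then for every finitely generated left A-module M, GK(M) = GK(Y ⊗_A M), where (A, X; Y, B) is a Morita context providing the equivalence with XY = A and YX = B. -/
/-- The degree of growth of `f : ℕ → ℕ`:
`γ(f) = inf { r ∈ ℝ | f i ≤ i ^ r for all sufficiently large i }`, with `γ(f) = ∞`
(the infimum of the empty set in `EReal`) if no such `r` exists. -/
noncomputable def gammaDeg (f : ℕ → ℕ) : EReal :=
  sInf ((fun r : ℝ => (r : EReal)) '' {r : ℝ | ∃ N : ℕ, ∀ i ≥ N, (f i : ℝ) ≤ (i : ℝ) ^ r})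

lemma gammaDeg_le_of_growth_le (f g : ℕ → ℕ) (C c d : ℕ) (hc : 0 < c)
    (h : ∀ i, f i ≤ C * g (c * i + d)) : gammaDeg f ≤ gammaDeg g := by
  apply le_sInf
  rintro x ⟨r, ⟨Nr, hNr⟩, rfl⟩
  rcases le_or_gt 0 r with hr | hr
  · have key : ∀ ε : ℝ, 0 < ε → gammaDeg f ≤ ((r + ε : ℝ) : EReal) := by
      intro ε hε
      have htend : Filter.Tendsto (fun i : ℕ => (i : ℝ) ^ ε) Filter.atTop Filter.atTop :=
        (tendsto_rpow_atTop hε).comp tendsto_natCast_atTop_atTop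
      obtain ⟨N₀, hN₀⟩ := (htend.eventually_ge_atTop ((C : ℝ) * ((c : ℝ) + d) ^ r)).exists_forall_of_atTop
      apply sInf_le
      refine ⟨r + ε, ⟨max (max Nr 1) N₀, fun i hi => ?_⟩, rfl⟩
      have hi1 : (1 : ℕ) ≤ i := le_trans (le_trans (le_max_right Nr 1) (le_max_left _ N₀)) hi
      have hiN : Nr ≤ i := le_trans (le_trans (le_max_left Nr 1) (le_max_left _ N₀)) hi
      have hiN0 : N₀ ≤ i := le_trans (le_max_right _ N₀) hi
      have hig : Nr ≤ c * i + d := le_trans hiN (le_trans (Nat.le_mul_of_pos_left i hc) (Nat.le_add_right _ _))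
      have h1 : (f i : ℝ) ≤ (C : ℝ) * (g (c * i + d) : ℝ) := by
        exact_mod_cast Nat.cast_le.mpr (h i)
      have h2 : (g (c * i + d) : ℝ) ≤ ((c * i + d : ℕ) : ℝ) ^ r := hNr _ hig
      have hbase : ((c * i + d : ℕ) : ℝ) ≤ ((c : ℝ) + d) * i := by
        push_cast
        have : (d : ℝ) ≤ (d : ℝ) * i := by
          nlinarith [(Nat.one_le_cast (α := ℝ)).mpr hi1, Nat.cast_nonneg (α := ℝ) d]
        nlinarith
      have hipos : (0:ℝ) < (i:ℝ) := by exact_mod_cast hi1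
      have h3 : ((c * i + d : ℕ) : ℝ) ^ r ≤ (((c : ℝ) + d) * i) ^ r := by
        apply Real.rpow_le_rpow (by positivity) hbase hr
      have h4 : (((c : ℝ) + d) * i) ^ r = ((c : ℝ) + d) ^ r * (i : ℝ) ^ r := by
        rw [Real.mul_rpow (by positivity) (le_of_lt hipos)]
      have h5 : (C : ℝ) * ((c : ℝ) + d) ^ r ≤ (i : ℝ) ^ ε := hN₀ i hiN0
      have h6 : (i : ℝ) ^ (r + ε) = (i : ℝ) ^ r * (i : ℝ) ^ ε := Real.rpow_add hipos r ε
      calc (f i : ℝ) ≤ (C : ℝ) * (g (c * i + d) : ℝ) := h1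
        _ ≤ (C : ℝ) * (((c : ℝ) + d) ^ r * (i : ℝ) ^ r) := by
            apply mul_le_mul_of_nonneg_left (le_trans h2 (h3.trans (le_of_eq h4))) (Nat.cast_nonneg C)
        _ = ((C : ℝ) * ((c : ℝ) + d) ^ r) * (i : ℝ) ^ r := by ring
        _ ≤ (i : ℝ) ^ ε * (i : ℝ) ^ r := by
            apply mul_le_mul_of_nonneg_right h5 (Real.rpow_nonneg (le_of_lt hipos) r)
        _ = (i : ℝ) ^ (r + ε) := by rw [h6]; ring
    by_contra hcon
    push_neg at hcon
    obtain ⟨y, hy1, hy2⟩ := EReal.exists_between_coe_real hcon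
    have := key (y - r) (by exact_mod_cast sub_pos.mpr (EReal.coe_lt_coe_iff.mp hy1))
    rw [show r + (y - r) = y by ring] at this
    exact absurd (lt_of_lt_of_le hy2 this) (lt_irrefl _)
  · -- r < 0 : g vanishes eventually, hence so does f
    apply sInf_le
    refine ⟨r, ⟨Nr + 2, fun i hi => ?_⟩, rfl⟩
    have hi2 : 2 ≤ i := le_trans (Nat.le_add_left 2 Nr) hi
    have hgz : g (c * i + d) = 0 := by
      have hj : Nr + 2 ≤ c * i + d :=
        le_trans hi (le_trans (Nat.le_mul_of_pos_left i hc) (Nat.le_add_right _ _))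
      have h2j : (2:ℝ) ≤ ((c * i + d : ℕ) : ℝ) := by
        exact_mod_cast le_trans hi2 (le_trans (Nat.le_mul_of_pos_left i hc) (Nat.le_add_right _ _))
      have := hNr _ (le_trans (Nat.le_add_right Nr 2) hj)
      have hlt : ((c * i + d : ℕ) : ℝ) ^ r < 1 := by
        have : ((c * i + d : ℕ) : ℝ) ^ r < ((c * i + d : ℕ) : ℝ) ^ (0:ℝ) :=
          Real.rpow_lt_rpow_of_exponent_lt (by linarith) hr
        simpa using this
      have : (g (c * i + d) : ℝ) < 1 := lt_of_le_of_lt this hlt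
      exact_mod_cast Nat.lt_one_iff.mp (by exact_mod_cast this)
    have hfz : f i = 0 := Nat.le_zero.mp (by simpa [hgz] using h i)
    rw [hfz]
    have : (0:ℝ) < (i:ℝ) ^ r := Real.rpow_pos_of_pos (by positivity) r
    simp only [Nat.cast_zero]
    linarith
universe u

/-- The `i`-th term `AᵢM₀` of the standard filtration of an `A`-module `M`
determined by a generating subspace `V ⊆ A` of the algebra (so `Aᵢ = V^i`) and a
generating subspace `M₀ ⊆ M`, as a `K`-subspace of `M`. -/
def modFilt (K A M : Type u) [Field K] [Ring A] [Algebra K A]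
    [AddCommGroup M] [Module K M] [Module A M] [IsScalarTower K A M]
    (V : Submodule K A) (M₀ : Submodule K M) (i : ℕ) : Submodule K M :=
  Submodule.span K {z : M | ∃ a ∈ V ^ i, ∃ m ∈ M₀, z = a • m}

/-- The Gelfand–Kirillov dimension of an `A`-module `M` relative to the standard
filtration `{V^i}` of `A`: the infimum over all finite-dimensional generating
subspaces `M₀` of `γ(i ↦ dim_K V^i M₀)` (the value is independent of the choice
of `M₀`, so the infimum realizes the usual definition). -/
noncomputable def gkDim (K A M : Type u) [Field K] [Ring A] [Algebra K A]
    [AddCommGroup M] [Module K M] [Module A M] [IsScalarTower K A M]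
    (V : Submodule K A) : EReal :=
  sInf {x : EReal | ∃ M₀ : Submodule K M, FiniteDimensional K M₀ ∧
    (∀ m : M, ∃ n : ℕ, m ∈ modFilt K A M V M₀ n) ∧
    x = gammaDeg fun i => Module.finrank K (modFilt K A M V M₀ i)}

open Submodule MulOpposite

section smulBil

variable (K R M : Type u) [Field K] [Ring R] [Algebra K R]
variable [AddCommGroup M] [Module K M] [Module R M] [IsScalarTower K R M]

/-- Scalar multiplication as a `K`-bilinear map. -/
noncomputable def smulBil : R →ₗ[K] M →ₗ[K] M :=
  LinearMap.mk₂ K (· • ·) (fun r s m => add_smul r s m) (fun k r m => smul_assoc k r m)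
    (fun r m n => smul_add r m n) (fun k r m => (smul_comm k r m).symm)

@[simp] lemma smulBil_apply (r : R) (m : M) : smulBil K R M r m = r • m := rfl

lemma modFilt_eq_map₂ (V : Submodule K R) (M₀ : Submodule K M) (i : ℕ) :
    modFilt K R M V M₀ i = Submodule.map₂ (smulBil K R M) (V ^ i) M₀ := by
  rw [modFilt, Submodule.map₂_eq_span_image2]
  congr 1
  ext z
  constructor
  · rintro ⟨a, ha, m, hm, rfl⟩; exact ⟨a, ha, m, hm, rfl⟩
  · rintro ⟨a, ha, m, hm, rfl⟩; exact ⟨a, ha, m, hm, rfl⟩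

variable {K R M}

lemma pow_le_pow_of_one_mem {V : Submodule K R} (h1 : (1 : R) ∈ V) {m n : ℕ} (h : m ≤ n) :
    V ^ m ≤ V ^ n := by
  induction n, h using Nat.le_induction with
  | base => exact le_rfl
  | succ n hmn ih =>
      refine le_trans ih ?_
      rw [pow_succ]
      calc V ^ n = V ^ n * 1 := (mul_one _).symm
        _ ≤ V ^ n * V := mul_le_mul' le_rfl (Submodule.one_le.mpr h1)


lemma map₂_one_smulBil (t : Submodule K M) : Submodule.map₂ (smulBil K R M) 1 t = t := by
  apply le_antisymm
  · rw [Submodule.map₂_le]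
    intro u hu m hm
    rw [Submodule.mem_one] at hu
    obtain ⟨k, rfl⟩ := hu
    show algebraMap K R k • m ∈ t
    rw [algebraMap_smul]
    exact Submodule.smul_mem _ _ hm
  · intro m hm
    have h1 : (smulBil K R M) (1 : R) m = m := one_smul _ _
    exact h1 ▸ Submodule.apply_mem_map₂ _ (Submodule.one_le.mp le_rfl) hm

lemma map₂_smul_mul (p q : Submodule K R) (t : Submodule K M) :
    Submodule.map₂ (smulBil K R M) (p * q) t =
      Submodule.map₂ (smulBil K R M) p (Submodule.map₂ (smulBil K R M) q t) := by
  apply le_antisymm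
  · rw [Submodule.map₂_le]
    intro u hu z hz
    refine Submodule.mul_induction_on hu (fun a ha b hb => ?_) (fun x y hx hy => ?_)
    · show (a * b) • z ∈ _
      rw [mul_smul]
      exact Submodule.apply_mem_map₂ _ ha (Submodule.apply_mem_map₂ _ hb hz)
    · show (x + y) • z ∈ _
      rw [add_smul]
      exact add_mem hx hy
  · rw [Submodule.map₂_le]
    intro a ha w hw
    rw [Submodule.map₂_eq_span_image2] at hw
    induction hw using Submodule.span_induction with
    | mem w hw =>
        obtain ⟨b, hb, z, hz, rfl⟩ := hw
        show a • (b • z) ∈ _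
        rw [← mul_smul]
        exact Submodule.apply_mem_map₂ _ (Submodule.mul_mem_mul ha hb) hz
    | zero => show a • (0 : M) ∈ _; rw [smul_zero]; exact zero_mem _
    | add x y hx hy ihx ihy => show a • (x + y) ∈ _; rw [smul_add]; exact add_mem ihx ihy
    | smul k x hx ih => show a • (k • x) ∈ _; rw [smul_comm]; exact Submodule.smul_mem _ _ ih

variable {S : Type u} [Ring S] [Algebra K S] [Module S M] [IsScalarTower K S M]

lemma map₂_smul_comm [SMulCommClass R S M] (p : Submodule K R) (q : Submodule K S)
    (t : Submodule K M) :
    Submodule.map₂ (smulBil K R M) p (Submodule.map₂ (smulBil K S M) q t) ≤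
      Submodule.map₂ (smulBil K S M) q (Submodule.map₂ (smulBil K R M) p t) := by
  rw [Submodule.map₂_le]
  intro a ha w hw
  rw [Submodule.map₂_eq_span_image2] at hw
  induction hw using Submodule.span_induction with
  | mem w hw =>
      obtain ⟨s, hs, z, hz, rfl⟩ := hw
      show a • (s • z) ∈ _
      rw [smul_comm]
      exact Submodule.apply_mem_map₂ _ hs (Submodule.apply_mem_map₂ _ ha hz)
  | zero => show a • (0 : M) ∈ _; rw [smul_zero]; exact zero_mem _
  | add x y hx hy ihx ihy => show a • (x + y) ∈ _; rw [smul_add]; exact add_mem ihx ihy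
  | smul k x hx ih => show a • (k • x) ∈ _; rw [smul_comm]; exact Submodule.smul_mem _ _ ih

end smulBil

section bilPull

variable {K S Z M N : Type u} [Field K] [Ring S] [Algebra K S]
variable [AddCommGroup Z] [Module K Z] [Module S Z] [IsScalarTower K S Z]
variable [AddCommGroup M] [Module K M]
variable [AddCommGroup N] [Module K N] [Module S N] [IsScalarTower K S N]

/-- Pulling the action through a bilinear map that is linear over the acting ring. -/
lemma map₂_smul_map₂_le (δ : Z →ₗ[K] M →ₗ[K] N)
    (hδ : ∀ (s : S) (z : Z) (m : M), δ (s • z) m = s • δ z m)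
    (q : Submodule K S) (Zq : Submodule K Z) (Mt : Submodule K M) :
    Submodule.map₂ (smulBil K S N) q (Submodule.map₂ δ Zq Mt) ≤
      Submodule.map₂ δ (Submodule.map₂ (smulBil K S Z) q Zq) Mt := by
  rw [Submodule.map₂_le]
  intro s hs w hw
  rw [Submodule.map₂_eq_span_image2] at hw
  induction hw using Submodule.span_induction with
  | mem w hw =>
      obtain ⟨z, hz, m, hm, rfl⟩ := hw
      show s • δ z m ∈ _
      rw [← hδ]
      exact Submodule.apply_mem_map₂ _ (Submodule.apply_mem_map₂ _ hs hz) hm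
  | zero => show s • (0 : N) ∈ _; rw [smul_zero]; exact zero_mem _
  | add x y hx hy ihx ihy => show s • (x + y) ∈ _; rw [smul_add]; exact add_mem ihx ihy
  | smul k x hx ih => show s • (k • x) ∈ _; rw [smul_comm]; exact Submodule.smul_mem _ _ ih

end bilPull

section bilBal

variable {K R Z M N : Type u} [Field K] [Ring R] [Algebra K R]
variable [AddCommGroup Z] [Module K Z] [Module Rᵐᵒᵖ Z] [IsScalarTower K Rᵐᵒᵖ Z]
variable [AddCommGroup M] [Module K M] [Module R M] [IsScalarTower K R M]
variable [AddCommGroup N] [Module K N]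

lemma map₂_bal_le (δ : Z →ₗ[K] M →ₗ[K] N)
    (hδ : ∀ (r : R) (z : Z) (m : M), δ (op r • z) m = δ z (r • m))
    (P : Submodule K R) (Zq : Submodule K Z) (Mt : Submodule K M) :
    Submodule.map₂ δ
        (Submodule.map₂ (smulBil K Rᵐᵒᵖ Z)
          (P.map ((opLinearEquiv K : R ≃ₗ[K] Rᵐᵒᵖ) : R →ₗ[K] Rᵐᵒᵖ)) Zq) Mt ≤
      Submodule.map₂ δ Zq (Submodule.map₂ (smulBil K R M) P Mt) := by
  rw [Submodule.map₂_le]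
  intro u hu m hm
  rw [Submodule.map₂_eq_span_image2] at hu
  induction hu using Submodule.span_induction with
  | mem u hu =>
      obtain ⟨r', hr', z, hz, rfl⟩ := hu
      obtain ⟨r, hr, rfl⟩ := Submodule.mem_map.mp hr'
      show δ ((opLinearEquiv K r) • z) m ∈ _
      rw [show (opLinearEquiv K r : Rᵐᵒᵖ) = op r from rfl, hδ]
      exact Submodule.apply_mem_map₂ _ hz (Submodule.apply_mem_map₂ _ hr hm)
  | zero => rw [LinearMap.map_zero₂]; exact zero_mem _
  | add x y hx hy ihx ihy => rw [LinearMap.map_add₂]; exact add_mem ihx ihy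
  | smul k x hx ih => rw [LinearMap.map_smul₂]; exact Submodule.smul_mem _ _ ih

end bilBal
section fg
variable {K M N Z : Type u} [Field K]
variable [AddCommGroup Z] [Module K Z]
variable [AddCommGroup M] [Module K M]
variable [AddCommGroup N] [Module K N]

lemma map₂_fg (δ : Z →ₗ[K] M →ₗ[K] N) {p : Submodule K Z} {q : Submodule K M}
    (hp : p.FG) (hq : q.FG) : (Submodule.map₂ δ p q).FG := by
  obtain ⟨s, rfl⟩ := hp
  obtain ⟨t, rfl⟩ := hq
  rw [Submodule.map₂_span_span]
  exact Submodule.fg_span ((Set.finite_coe_iff.mpr (s.finite_toSet.image2 _ t.finite_toSet)))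

lemma map₂_span_finset_eq_isup (δ : Z →ₗ[K] M →ₗ[K] N) (t : Finset Z) (q : Submodule K M) :
    Submodule.map₂ δ (Submodule.span K (t : Set Z)) q = ⨆ z ∈ t, q.map (δ z) := by
  apply le_antisymm
  · rw [Submodule.map₂_le]
    intro u hu m hm
    induction hu using Submodule.span_induction with
    | mem u hu =>
        have hu' : u ∈ t := hu
        have h : q.map (δ u) ≤ ⨆ z ∈ t, q.map (δ z) := le_iSup₂ (f := fun z (_ : z ∈ t) => q.map (δ z)) u hu'
        exact h (Submodule.mem_map_of_mem hm)
    | zero => rw [LinearMap.map_zero₂]; exact zero_mem _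
    | add x y hx hy ihx ihy => rw [LinearMap.map_add₂]; exact add_mem ihx ihy
    | smul k x hx ih => rw [LinearMap.map_smul₂]; exact Submodule.smul_mem _ _ ih
  · refine iSup₂_le fun z hz => ?_
    rintro _ ⟨m, hm, rfl⟩
    exact Submodule.apply_mem_map₂ _ (Submodule.subset_span hz) hm

lemma isup_map_fg (δ : Z →ₗ[K] M →ₗ[K] N) (t : Finset Z) {q : Submodule K M} (hq : q.FG) :
    (⨆ z ∈ t, q.map (δ z)).FG := by
  classical
  induction t using Finset.induction with
  | empty => simpa using Submodule.fg_bot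
  | @insert a s ha ih =>
      rw [Finset.iSup_insert]
      exact Submodule.FG.sup (hq.map _) ih

lemma finrank_map₂_le (δ : Z →ₗ[K] M →ₗ[K] N) (t : Finset Z) (q : Submodule K M)
    [FiniteDimensional K q] :
    Module.finrank K (Submodule.map₂ δ (Submodule.span K (t : Set Z)) q) ≤
      t.card * Module.finrank K q := by
  rw [map₂_span_finset_eq_isup]
  classical
  have hqfg : q.FG := (Submodule.fg_iff_finiteDimensional q).mpr inferInstance
  induction t using Finset.induction with
  | empty =>
      rw [show (⨆ z ∈ (∅ : Finset Z), q.map (δ z)) = ⊥ by simp]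
      simp
  | @insert a s ha ih =>
      rw [Finset.iSup_insert]
      haveI h1 : FiniteDimensional K (q.map (δ a)) :=
        (Submodule.fg_iff_finiteDimensional _).mp (hqfg.map _)
      haveI h2 : FiniteDimensional K ↥(⨆ z ∈ s, q.map (δ z)) :=
        (Submodule.fg_iff_finiteDimensional _).mp (isup_map_fg δ s hqfg)
      have hsup := Submodule.finrank_sup_add_finrank_inf_eq (q.map (δ a)) (⨆ z ∈ s, q.map (δ z))
      have hmap := Submodule.finrank_map_le (δ a) q
      rw [Finset.card_insert_of_notMem ha]
      rw [add_mul, one_mul]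
      linarith [hsup, hmap, ih]

lemma fg_pow {R : Type u} [Ring R] [Algebra K R] {V : Submodule K R} (hV : V.FG) (n : ℕ) :
    (V ^ n).FG := by
  induction n with
  | zero =>
      rw [pow_zero]
      exact ⟨{1}, by rw [Finset.coe_singleton, Submodule.one_eq_span]⟩
  | succ n ih => rw [pow_succ]; exact Submodule.FG.mul ih hV

end fg
section exhaust
variable {K R Z : Type u} [Field K] [Ring R] [Algebra K R]
variable [AddCommGroup Z] [Module K Z] [Module R Z] [IsScalarTower K R Z]

lemma exists_level_mem (V : Submodule K R) (h1 : (1 : R) ∈ V)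
    (hgen : ∀ r : R, ∃ n, r ∈ V ^ n) (Z₀ : Submodule K Z) (t : Finset Z)
    (htZ : (t : Set Z) ⊆ Z₀) (ht : Submodule.span R (t : Set Z) = ⊤) (z : Z) :
    ∃ n, z ∈ Submodule.map₂ (smulBil K R Z) (V ^ n) Z₀ := by
  have hz : z ∈ Submodule.span R (t : Set Z) := ht ▸ Submodule.mem_top
  obtain ⟨f, hf⟩ := mem_span_finset.mp hz
  choose n hn using fun i => hgen (f i)
  classical
  refine ⟨t.sup n, ?_⟩
  rw [← hf.2]
  refine Submodule.sum_mem _ fun i hi => ?_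
  exact Submodule.apply_mem_map₂ _ (pow_le_pow_of_one_mem h1 (Finset.le_sup hi) (hn i)) (htZ hi)

end exhaust

section core
variable {K R S M N Z : Type u} [Field K] [Ring R] [Algebra K R] [Ring S] [Algebra K S]
variable [AddCommGroup M] [Module K M] [Module R M] [IsScalarTower K R M]
variable [AddCommGroup N] [Module K N] [Module S N] [IsScalarTower K S N]
variable [AddCommGroup Z] [Module K Z] [Module S Z] [IsScalarTower K S Z]
variable [Module Rᵐᵒᵖ Z] [IsScalarTower K Rᵐᵒᵖ Z] [SMulCommClass S Rᵐᵒᵖ Z]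

/-- The core comparison: if `Z` is a bimodule pairing `M` to `N` compatibly with
the filtrations, then the GK dimension can only drop. -/
lemma gkDim_le_core (VR : Submodule K R) (hVR1 : (1 : R) ∈ VR) (hVRfg : VR.FG)
    (VS : Submodule K S) (hVS1 : (1 : S) ∈ VS) (hVSfg : VS.FG)
    (Z₀ : Submodule K Z) (hZ₀ : Z₀.FG)
    (hZS : ∀ z : Z, ∃ n, z ∈ Submodule.map₂ (smulBil K S Z) (VS ^ n) Z₀)
    (hZR : ∀ z : Z, ∃ n, z ∈ Submodule.map₂ (smulBil K Rᵐᵒᵖ Z)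
      ((VR.map ((opLinearEquiv K : R ≃ₗ[K] Rᵐᵒᵖ) : R →ₗ[K] Rᵐᵒᵖ)) ^ n) Z₀)
    (δ : Z →ₗ[K] M →ₗ[K] N)
    (hδS : ∀ (s : S) (z : Z) (m : M), δ (s • z) m = s • δ z m)
    (hδbal : ∀ (r : R) (z : Z) (m : M), δ (op r • z) m = δ z (r • m))
    (hδsurj : ∀ w : N, w ∈ Submodule.span K {w : N | ∃ z m, w = δ z m}) :
    gkDim K S N VS ≤ gkDim K R M VR := by
  classical
  rw [gkDim, gkDim]
  apply le_sInf
  rintro x ⟨M₀, hM₀fin, hM₀gen, rfl⟩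
  set VR' : Submodule K Rᵐᵒᵖ :=
    VR.map ((opLinearEquiv K : R ≃ₗ[K] Rᵐᵒᵖ) : R →ₗ[K] Rᵐᵒᵖ) with hVR'
  have hVR'1 : (1 : Rᵐᵒᵖ) ∈ VR' := ⟨1, hVR1, rfl⟩
  have hM₀fg : M₀.FG := (Submodule.fg_iff_finiteDimensional M₀).mpr hM₀fin
  set N₀ : Submodule K N := Submodule.map₂ δ Z₀ M₀ with hN₀
  have hN₀fg : N₀.FG := map₂_fg δ hZ₀ hM₀fg
  -- the comparison constant `c`
  have hWfg : (Submodule.map₂ (smulBil K S Z) VS Z₀).FG := map₂_fg _ hVSfg hZ₀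
  obtain ⟨w, hw⟩ := hWfg
  have hGmono : ∀ {m n : ℕ}, m ≤ n →
      Submodule.map₂ (smulBil K Rᵐᵒᵖ Z) (VR' ^ m) Z₀ ≤
        Submodule.map₂ (smulBil K Rᵐᵒᵖ Z) (VR' ^ n) Z₀ :=
    fun h => Submodule.map₂_le_map₂_left (pow_le_pow_of_one_mem hVR'1 h)
  choose nw hnw using fun z : Z => hZR z
  obtain ⟨c, hc1, hcmp⟩ : ∃ c, 1 ≤ c ∧ Submodule.map₂ (smulBil K S Z) VS Z₀ ≤
      Submodule.map₂ (smulBil K Rᵐᵒᵖ Z) (VR' ^ c) Z₀ := by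
    refine ⟨max (w.sup nw) 1, le_max_right _ _, ?_⟩
    rw [← hw, Submodule.span_le]
    intro z hz
    exact hGmono (le_trans (Finset.le_sup hz) (le_max_left _ _)) (hnw z)
  -- the key inductive comparison
  have hcomp : ∀ i : ℕ, Submodule.map₂ (smulBil K S Z) (VS ^ i) Z₀ ≤
      Submodule.map₂ (smulBil K Rᵐᵒᵖ Z) (VR' ^ (c * i)) Z₀ := by
    intro i
    induction i with
    | zero =>
        rw [pow_zero, Nat.mul_zero, pow_zero, map₂_one_smulBil, map₂_one_smulBil]
    | succ i ih =>
        rw [pow_succ, map₂_smul_mul]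
        calc Submodule.map₂ (smulBil K S Z) (VS ^ i)
              (Submodule.map₂ (smulBil K S Z) VS Z₀)
            ≤ Submodule.map₂ (smulBil K S Z) (VS ^ i)
              (Submodule.map₂ (smulBil K Rᵐᵒᵖ Z) (VR' ^ c) Z₀) :=
              Submodule.map₂_le_map₂_right hcmp
          _ ≤ Submodule.map₂ (smulBil K Rᵐᵒᵖ Z) (VR' ^ c)
              (Submodule.map₂ (smulBil K S Z) (VS ^ i) Z₀) :=
              map₂_smul_comm _ _ _
          _ ≤ Submodule.map₂ (smulBil K Rᵐᵒᵖ Z) (VR' ^ c)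
              (Submodule.map₂ (smulBil K Rᵐᵒᵖ Z) (VR' ^ (c * i)) Z₀) :=
              Submodule.map₂_le_map₂_right ih
          _ = Submodule.map₂ (smulBil K Rᵐᵒᵖ Z) (VR' ^ c * VR' ^ (c * i)) Z₀ :=
              (map₂_smul_mul _ _ _).symm
          _ = Submodule.map₂ (smulBil K Rᵐᵒᵖ Z) (VR' ^ (c * (i + 1))) Z₀ := by
              rw [← pow_add]
              ring_nf
  -- generation: `N₀` generates `N`
  have hmonoN : ∀ {m n : ℕ}, m ≤ n →
      Submodule.map₂ (smulBil K S N) (VS ^ m) N₀ ≤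
        Submodule.map₂ (smulBil K S N) (VS ^ n) N₀ :=
    fun h => Submodule.map₂_le_map₂_left (pow_le_pow_of_one_mem hVS1 h)
  have hkey2 : ∀ (j : ℕ) (z : Z), z ∈ Submodule.map₂ (smulBil K S Z) (VS ^ j) Z₀ →
      ∀ m₀ ∈ M₀, δ z m₀ ∈ Submodule.map₂ (smulBil K S N) (VS ^ j) N₀ := by
    intro j z hz
    rw [Submodule.map₂_eq_span_image2] at hz
    induction hz using Submodule.span_induction with
    | mem z hzm =>
        intro m₀ hm₀
        obtain ⟨s, hs, z₀, hz₀, rfl⟩ := hzm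
        show δ (s • z₀) m₀ ∈ _
        rw [hδS]
        exact Submodule.apply_mem_map₂ _ hs (Submodule.apply_mem_map₂ _ hz₀ hm₀)
    | zero => intro m₀ hm₀; rw [LinearMap.map_zero₂]; exact zero_mem _
    | add x y hx hy ihx ihy =>
        intro m₀ hm₀
        rw [LinearMap.map_add₂]
        exact add_mem (ihx m₀ hm₀) (ihy m₀ hm₀)
    | smul k x hx ih =>
        intro m₀ hm₀
        rw [LinearMap.map_smul₂]
        exact Submodule.smul_mem _ _ (ih m₀ hm₀)
  have hkey1 : ∀ (j : ℕ) (m : M), m ∈ Submodule.map₂ (smulBil K R M) (VR ^ j) M₀ →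
      ∀ z : Z, ∃ n, δ z m ∈ Submodule.map₂ (smulBil K S N) (VS ^ n) N₀ := by
    intro j m hm
    rw [Submodule.map₂_eq_span_image2] at hm
    induction hm using Submodule.span_induction with
    | mem m hmm =>
        intro z
        obtain ⟨a, ha, m₀, hm₀, rfl⟩ := hmm
        show ∃ n, δ z (a • m₀) ∈ _
        have hb : δ z (a • m₀) = δ (op a • z) m₀ := (hδbal a z m₀).symm
        obtain ⟨n₂, hn₂⟩ := hZS (op a • z)
        exact ⟨n₂, hb ▸ hkey2 n₂ _ hn₂ m₀ hm₀⟩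
    | zero =>
        intro z
        exact ⟨0, by rw [map_zero]; exact zero_mem _⟩
    | add x y hx hy ihx ihy =>
        intro z
        obtain ⟨n₁, h1⟩ := ihx z
        obtain ⟨n₂, h2⟩ := ihy z
        refine ⟨max n₁ n₂, ?_⟩
        rw [map_add]
        exact add_mem (hmonoN (le_max_left _ _) h1) (hmonoN (le_max_right _ _) h2)
    | smul k x hx ih =>
        intro z
        obtain ⟨n₁, h1⟩ := ih z
        exact ⟨n₁, by rw [map_smul]; exact Submodule.smul_mem _ _ h1⟩
  have hgenN : ∀ w : N, ∃ n, w ∈ modFilt K S N VS N₀ n := by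
    intro w
    have hw := hδsurj w
    have hex : ∃ n, w ∈ Submodule.map₂ (smulBil K S N) (VS ^ n) N₀ := by
      induction hw using Submodule.span_induction with
      | mem w hwm =>
          obtain ⟨z, m, rfl⟩ := hwm
          obtain ⟨n₁, hn₁⟩ := hM₀gen m
          rw [modFilt_eq_map₂] at hn₁
          exact hkey1 n₁ m hn₁ z
      | zero => exact ⟨0, zero_mem _⟩
      | add x y hx hy ihx ihy =>
          obtain ⟨n₁, h1⟩ := ihx
          obtain ⟨n₂, h2⟩ := ihy
          exact ⟨max n₁ n₂,
            add_mem (hmonoN (le_max_left _ _) h1) (hmonoN (le_max_right _ _) h2)⟩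
      | smul k x hx ih =>
          obtain ⟨n₁, h1⟩ := ih
          exact ⟨n₁, Submodule.smul_mem _ _ h1⟩
    obtain ⟨n, hn⟩ := hex
    exact ⟨n, by rw [modFilt_eq_map₂]; exact hn⟩
  -- the dimension bound
  obtain ⟨tz, htz⟩ := id hZ₀
  have hdimle : ∀ i : ℕ, modFilt K S N VS N₀ i ≤
      Submodule.map₂ δ Z₀ (modFilt K R M VR M₀ (c * i)) := by
    intro i
    rw [modFilt_eq_map₂, modFilt_eq_map₂, hN₀]
    calc Submodule.map₂ (smulBil K S N) (VS ^ i) (Submodule.map₂ δ Z₀ M₀)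
        ≤ Submodule.map₂ δ (Submodule.map₂ (smulBil K S Z) (VS ^ i) Z₀) M₀ :=
          map₂_smul_map₂_le δ hδS _ _ _
      _ ≤ Submodule.map₂ δ (Submodule.map₂ (smulBil K Rᵐᵒᵖ Z) (VR' ^ (c * i)) Z₀) M₀ :=
          Submodule.map₂_le_map₂_left (hcomp i)
      _ ≤ Submodule.map₂ δ Z₀ (Submodule.map₂ (smulBil K R M) (VR ^ (c * i)) M₀) := by
          have hpow : VR' ^ (c * i) =
              (VR ^ (c * i)).map
                ((opLinearEquiv K : R ≃ₗ[K] Rᵐᵒᵖ) : R →ₗ[K] Rᵐᵒᵖ) := by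
            rw [hVR', Submodule.map_op_pow]
          rw [hpow]
          exact map₂_bal_le δ hδbal _ _ _
  haveI hN₀fin : FiniteDimensional K N₀ := (Submodule.fg_iff_finiteDimensional _).mp hN₀fg
  have hbound : ∀ i, Module.finrank K (modFilt K S N VS N₀ i) ≤
      tz.card * Module.finrank K (modFilt K R M VR M₀ (c * i + 0)) := by
    intro i
    rw [Nat.add_zero]
    have h1fg : (modFilt K R M VR M₀ (c * i)).FG := by
      rw [modFilt_eq_map₂]
      exact map₂_fg _ (fg_pow hVRfg _) hM₀fg
    haveI h1 : FiniteDimensional K (modFilt K R M VR M₀ (c * i)) :=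
      (Submodule.fg_iff_finiteDimensional _).mp h1fg
    haveI h2 : FiniteDimensional K
        ↥(Submodule.map₂ δ Z₀ (modFilt K R M VR M₀ (c * i))) :=
      (Submodule.fg_iff_finiteDimensional _).mp (map₂_fg _ hZ₀ h1fg)
    calc Module.finrank K (modFilt K S N VS N₀ i)
        ≤ Module.finrank K ↥(Submodule.map₂ δ Z₀ (modFilt K R M VR M₀ (c * i))) :=
          Submodule.finrank_mono (hdimle i)
      _ ≤ tz.card * Module.finrank K (modFilt K R M VR M₀ (c * i)) := by
          rw [← htz]
          exact finrank_map₂_le δ tz _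
  have hγ : gammaDeg (fun i => Module.finrank K (modFilt K S N VS N₀ i)) ≤
      gammaDeg (fun i => Module.finrank K (modFilt K R M VR M₀ i)) :=
    gammaDeg_le_of_growth_le _ _ tz.card c 0 hc1 hbound
  exact le_trans (sInf_le ⟨N₀, hN₀fin, hgenN, rfl⟩) hγ
end core
/-- **Morita invariance of the Gelfand–Kirillov dimension.** Let `A` and `B` be
Morita equivalent finitely generated `K`-algebras, the equivalence provided by a
Morita context `(A, X; Y, B)` with `XY = A` and `YX = B`. Then for every finitely
generated left `A`-module `M`, `GK(M) = GK(Y ⊗_A M)`; here the tensor product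
`Y ⊗_A M` is represented by a `B`-module `N` together with the universal
`A`-balanced `B`-linear bilinear map `β : Y × M → N`. -/
theorem gkDim_morita_invariant (K A B X Y M N : Type u)
    [Field K] [Ring A] [Algebra K A] [Ring B] [Algebra K B]
    -- `A` is a finitely generated algebra with standard filtration `{VA^i}`
    (VA : Submodule K A) (hVA1 : (1 : A) ∈ VA) (hVAfin : FiniteDimensional K VA)
    (hVAgen : ∀ a : A, ∃ n : ℕ, a ∈ VA ^ n)
    -- `B` is a finitely generated algebra with standard filtration `{VB^i}`
    (VB : Submodule K B) (hVB1 : (1 : B) ∈ VB) (hVBfin : FiniteDimensional K VB)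
    (hVBgen : ∀ a : B, ∃ n : ℕ, a ∈ VB ^ n)
    -- `X` is an `(A,B)`-bimodule, `Y` is a `(B,A)`-bimodule, both compatible
    -- with the `K`-structures
    [AddCommGroup X] [Module K X] [Module A X] [IsScalarTower K A X]
    [Module Bᵐᵒᵖ X] [SMulCommClass K Bᵐᵒᵖ X] [SMulCommClass A Bᵐᵒᵖ X]
    [AddCommGroup Y] [Module K Y] [Module B Y] [IsScalarTower K B Y]
    [Module Aᵐᵒᵖ Y] [SMulCommClass K Aᵐᵒᵖ Y] [SMulCommClass B Aᵐᵒᵖ Y]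
    -- the multiplication maps of the Morita context, as `K`-bilinear maps
    (μ : X →ₗ[K] Y →ₗ[K] A) (ν : Y →ₗ[K] X →ₗ[K] B)
    -- `μ` is an `(A,A)`-bimodule map, balanced over `B`
    (hμl : ∀ (a : A) (x : X) (y : Y), μ (a • x) y = a * μ x y)
    (hμr : ∀ (a : A) (x : X) (y : Y), μ x (MulOpposite.op a • y) = μ x y * a)
    (hμbal : ∀ (b : B) (x : X) (y : Y), μ (MulOpposite.op b • x) y = μ x (b • y))
    -- `ν` is a `(B,B)`-bimodule map, balanced over `A`
    (hνl : ∀ (b : B) (y : Y) (x : X), ν (b • y) x = b * ν y x)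
    (hνr : ∀ (b : B) (y : Y) (x : X), ν y (MulOpposite.op b • x) = ν y x * b)
    (hνbal : ∀ (a : A) (y : Y) (x : X), ν (MulOpposite.op a • y) x = ν y (a • x))
    -- the associativity axioms of the Morita context
    (hass1 : ∀ (x x' : X) (y : Y), μ x y • x' = MulOpposite.op (ν y x') • x)
    (hass2 : ∀ (y y' : Y) (x : X), ν y x • y' = MulOpposite.op (μ x y') • y)
    -- `XY = A` and `YX = B`
    (hXY : Submodule.span K {z : A | ∃ (x : X) (y : Y), z = μ x y} = ⊤)
    (hYX : Submodule.span K {z : B | ∃ (y : Y) (x : X), z = ν y x} = ⊤)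
    -- `X` and `Y` are finitely generated on each side
    (hXl : ∃ s : Finset X, Submodule.span A (s : Set X) = ⊤)
    (hXr : ∃ s : Finset X, Submodule.span Bᵐᵒᵖ (s : Set X) = ⊤)
    (hYl : ∃ s : Finset Y, Submodule.span B (s : Set Y) = ⊤)
    (hYr : ∃ s : Finset Y, Submodule.span Aᵐᵒᵖ (s : Set Y) = ⊤)
    -- `M` is a finitely generated left `A`-module
    [AddCommGroup M] [Module K M] [Module A M] [IsScalarTower K A M]
    (hMfg : ∃ M₀ : Submodule K M, FiniteDimensional K M₀ ∧
      ∀ m : M, ∃ n : ℕ, m ∈ modFilt K A M VA M₀ n)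
    -- `N` represents `Y ⊗_A M`: a `B`-module with a `B`-linear `A`-balanced
    -- bilinear map `β : Y × M → N` which is universal among such maps
    [AddCommGroup N] [Module K N] [Module B N] [IsScalarTower K B N]
    (β : Y →ₗ[K] M →ₗ[K] N)
    (hβl : ∀ (b : B) (y : Y) (m : M), β (b • y) m = b • β y m)
    (hβbal : ∀ (a : A) (y : Y) (m : M), β (MulOpposite.op a • y) m = β y (a • m))
    (huniv : ∀ (P : Type u) (_ : AddCommGroup P) (_ : Module K P) (_ : Module B P)
      (_ : IsScalarTower K B P) (γ' : Y →ₗ[K] M →ₗ[K] P),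
      (∀ (b : B) (y : Y) (m : M), γ' (b • y) m = b • γ' y m) →
      (∀ (a : A) (y : Y) (m : M), γ' (MulOpposite.op a • y) m = γ' y (a • m)) →
      ∃! h : N →ₗ[B] P, ∀ (y : Y) (m : M), h (β y m) = γ' y m) :
    gkDim K A M VA = gkDim K B N VB := by
  classical
  -- pure decompositions of the identities of `A` and `B`
  have h1A : ∃ (T : ℕ) (xs : Fin T → X) (ys : Fin T → Y),
      (∑ t, μ (xs t) (ys t)) = (1 : A) := by
    have h1 : (1 : A) ∈ Submodule.span K {z : A | ∃ (x : X) (y : Y), z = μ x y} := by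
      rw [hXY]; exact Submodule.mem_top
    obtain ⟨n, f, g, hfg⟩ := mem_span_set'.mp h1
    choose xg yg hg using fun i => (g i).2
    refine ⟨n, fun i => f i • xg i, yg, ?_⟩
    rw [← hfg]
    refine Finset.sum_congr rfl fun i _ => ?_
    rw [LinearMap.map_smul₂, ← hg i]
  have h1B : ∃ (T : ℕ) (ys : Fin T → Y) (xs : Fin T → X),
      (∑ t, ν (ys t) (xs t)) = (1 : B) := by
    have h1 : (1 : B) ∈ Submodule.span K {z : B | ∃ (y : Y) (x : X), z = ν y x} := by
      rw [hYX]; exact Submodule.mem_top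
    obtain ⟨n, f, g, hfg⟩ := mem_span_set'.mp h1
    choose yg xg hg using fun i => (g i).2
    refine ⟨n, fun i => f i • yg i, xg, ?_⟩
    rw [← hfg]
    refine Finset.sum_congr rfl fun i _ => ?_
    rw [LinearMap.map_smul₂, ← hg i]
  obtain ⟨T, xs, ys, hT⟩ := h1A
  obtain ⟨T', ys', xs', hT'⟩ := h1B
  -- the scalar tower `K Aᵐᵒᵖ Y`
  have smul_op_A : ∀ (k : K) (r : Aᵐᵒᵖ) (y : Y), (k • r) • y = k • (r • y) := by
    intro k r y
    set w : Y := (k • r) • y - k • (r • y) with hw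
    have hμw : ∀ x : X, μ x w = 0 := by
      intro x
      have e0 : (k • r) = MulOpposite.op (k • MulOpposite.unop r) := by
        rw [MulOpposite.op_smul, MulOpposite.op_unop]
      have e1 : μ x ((k • r) • y) = μ x y * (k • MulOpposite.unop r) := by
        rw [e0, hμr]
      have e2 : μ x (k • (r • y)) = k • μ x (r • y) := map_smul _ _ _
      have e3 : μ x (r • y) = μ x y * MulOpposite.unop r := by
        conv_lhs => rw [← MulOpposite.op_unop r]
        rw [hμr]
      rw [hw, map_sub, e1, e2, e3, mul_smul_comm, sub_self]
    have hνw : ∀ x : X, ν w x = 0 := by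
      intro x
      have hz : ∀ x₁ : X, MulOpposite.op (ν w x) • x₁ = 0 := by
        intro x₁
        rw [← hass1, hμw, zero_smul]
      calc ν w x = 1 * ν w x := (one_mul _).symm
        _ = (∑ s, ν (ys' s) (xs' s)) * ν w x := by rw [hT']
        _ = ∑ s, ν (ys' s) (xs' s) * ν w x := by rw [Finset.sum_mul]
        _ = ∑ s, ν (ys' s) (MulOpposite.op (ν w x) • xs' s) := by
            refine Finset.sum_congr rfl fun s _ => ?_
            rw [hνr]
        _ = 0 := by
            refine Finset.sum_eq_zero fun s _ => ?_
            rw [hz, map_zero]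
    have hw0 : w = 0 := by
      calc w = (1 : Aᵐᵒᵖ) • w := (one_smul _ _).symm
        _ = MulOpposite.op (∑ t, μ (xs t) (ys t)) • w := by rw [hT, MulOpposite.op_one]
        _ = (∑ t, MulOpposite.op (μ (xs t) (ys t))) • w := by rw [Finset.op_sum]
        _ = ∑ t, MulOpposite.op (μ (xs t) (ys t)) • w := Finset.sum_smul
        _ = ∑ t, ν w (xs t) • ys t := by
            refine Finset.sum_congr rfl fun t _ => ?_
            rw [hass2]
        _ = 0 := by
            refine Finset.sum_eq_zero fun t _ => ?_
            rw [hνw, zero_smul]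
    have : (k • r) • y - k • (r • y) = 0 := by rw [← hw]; exact hw0
    exact sub_eq_zero.mp this
  haveI instTowerAY : IsScalarTower K Aᵐᵒᵖ Y := ⟨smul_op_A⟩
  -- the scalar tower `K Bᵐᵒᵖ X`
  have smul_op_B : ∀ (k : K) (r : Bᵐᵒᵖ) (x : X), (k • r) • x = k • (r • x) := by
    intro k r x
    set w : X := (k • r) • x - k • (r • x) with hw
    have hνw : ∀ y : Y, ν y w = 0 := by
      intro y
      have e0 : (k • r) = MulOpposite.op (k • MulOpposite.unop r) := by
        rw [MulOpposite.op_smul, MulOpposite.op_unop]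
      have e1 : ν y ((k • r) • x) = ν y x * (k • MulOpposite.unop r) := by
        rw [e0, hνr]
      have e2 : ν y (k • (r • x)) = k • ν y (r • x) := map_smul _ _ _
      have e3 : ν y (r • x) = ν y x * MulOpposite.unop r := by
        conv_lhs => rw [← MulOpposite.op_unop r]
        rw [hνr]
      rw [hw, map_sub, e1, e2, e3, mul_smul_comm, sub_self]
    have hμw : ∀ y : Y, μ w y = 0 := by
      intro y
      have hz : ∀ y₁ : Y, MulOpposite.op (μ w y) • y₁ = 0 := by
        intro y₁
        rw [← hass2, hνw, zero_smul]
      calc μ w y = 1 * μ w y := (one_mul _).symm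
        _ = (∑ t, μ (xs t) (ys t)) * μ w y := by rw [hT]
        _ = ∑ t, μ (xs t) (ys t) * μ w y := by rw [Finset.sum_mul]
        _ = ∑ t, μ (xs t) (MulOpposite.op (μ w y) • ys t) := by
            refine Finset.sum_congr rfl fun t _ => ?_
            rw [hμr]
        _ = 0 := by
            refine Finset.sum_eq_zero fun t _ => ?_
            rw [hz, map_zero]
    have hw0 : w = 0 := by
      calc w = (1 : Bᵐᵒᵖ) • w := (one_smul _ _).symm
        _ = MulOpposite.op (∑ s, ν (ys' s) (xs' s)) • w := by rw [hT', MulOpposite.op_one]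
        _ = (∑ s, MulOpposite.op (ν (ys' s) (xs' s))) • w := by rw [Finset.op_sum]
        _ = ∑ s, MulOpposite.op (ν (ys' s) (xs' s)) • w := Finset.sum_smul
        _ = ∑ s, μ w (ys' s) • xs' s := by
            refine Finset.sum_congr rfl fun s _ => ?_
            rw [hass1]
        _ = 0 := by
            refine Finset.sum_eq_zero fun s _ => ?_
            rw [hμw, zero_smul]
    have : (k • r) • x - k • (r • x) = 0 := by rw [← hw]; exact hw0
    exact sub_eq_zero.mp this
  haveI instTowerBX : IsScalarTower K Bᵐᵒᵖ X := ⟨smul_op_B⟩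
  -- the image of `β` spans `N`
  have hβsurj : ∀ w : N, w ∈ Submodule.span K {w : N | ∃ y m, w = β y m} := by
    have hstable : ∀ (b : B) (n : N),
        n ∈ Submodule.span K {w : N | ∃ y m, w = β y m} →
          b • n ∈ Submodule.span K {w : N | ∃ y m, w = β y m} := by
      intro b n hn
      induction hn using Submodule.span_induction with
      | mem n hnm =>
          obtain ⟨y, m, rfl⟩ := hnm
          rw [← hβl]
          exact Submodule.subset_span ⟨_, _, rfl⟩
      | zero => rw [smul_zero]; exact zero_mem _
      | add u v hu hv ihu ihv => rw [smul_add]; exact add_mem ihu ihv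
      | smul k u hu ih =>
          rw [smul_comm]
          exact Submodule.smul_mem _ _ ih
    set N'' : Submodule B N :=
      { carrier := Submodule.span K {w : N | ∃ y m, w = β y m}
        add_mem' := fun {a b} ha hb => add_mem ha hb
        zero_mem' := zero_mem _
        smul_mem' := fun b {n} hn => hstable b n hn } with hN''
    haveI instQT : IsScalarTower K B (N ⧸ N'') := by
      refine ⟨fun k b q => ?_⟩
      obtain ⟨n, rfl⟩ := Submodule.Quotient.mk_surjective N'' q
      rw [← Submodule.Quotient.mk_smul, ← Submodule.Quotient.mk_smul, smul_assoc,
        Submodule.Quotient.mk_smul]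
    intro w
    by_contra hcon
    obtain ⟨h, hh, huniq⟩ := huniv (N ⧸ N'') inferInstance inferInstance inferInstance
      instQT 0 (by intro b y m; simp) (by intro a y m; simp)
    have e1 : N''.mkQ = h := by
      refine huniq N''.mkQ fun y m => ?_
      simp only [LinearMap.zero_apply]
      rw [Submodule.mkQ_apply, Submodule.Quotient.mk_eq_zero]
      exact Submodule.subset_span ⟨y, m, rfl⟩
    have e2 : (0 : N →ₗ[B] N ⧸ N'') = h := huniq 0 (by intro y m; simp)
    have hz : N''.mkQ w = 0 := by rw [e1, ← e2]; rfl
    rw [Submodule.mkQ_apply, Submodule.Quotient.mk_eq_zero] at hz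
    exact hcon hz
  -- the `B`-module structure on `X →ₗ[K] M` through the right action on `X`
  let opSmulMap : B → X →ₗ[K] X := fun b =>
    { toFun := fun x => MulOpposite.op b • x
      map_add' := fun x y => smul_add _ x y
      map_smul' := fun k x => (smul_comm k (MulOpposite.op b) x).symm }
  letI instSMulBP : SMul B (X →ₗ[K] M) := ⟨fun b f => f.comp (opSmulMap b)⟩
  have smul_def : ∀ (b : B) (f : X →ₗ[K] M) (x : X), (b • f) x = f (MulOpposite.op b • x) :=
    fun b f x => rfl
  letI instMABP : MulAction B (X →ₗ[K] M) :=
    { one_smul := fun f => by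
        ext x
        rw [smul_def, MulOpposite.op_one, one_smul]
      mul_smul := fun b b' f => by
        ext x
        rw [smul_def, smul_def, smul_def, ← mul_smul, ← MulOpposite.op_mul] }
  letI instDMABP : DistribMulAction B (X →ₗ[K] M) :=
    { smul_zero := fun b => by ext x; rw [smul_def]; rfl
      smul_add := fun b f g => by
        ext x
        rw [smul_def]
        exact rfl }
  letI moduleBP : Module B (X →ₗ[K] M) :=
    { add_smul := fun b b' f => by
        ext x
        rw [LinearMap.add_apply, smul_def, smul_def, smul_def, MulOpposite.op_add, add_smul,
          map_add]
      zero_smul := fun f => by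
        ext x
        rw [smul_def, MulOpposite.op_zero, zero_smul, map_zero]
        rfl }
  haveI towerKBP : IsScalarTower K B (X →ₗ[K] M) := by
    refine ⟨fun k b f => ?_⟩
    ext x
    rw [smul_def, LinearMap.smul_apply, smul_def, MulOpposite.op_smul, smul_op_B, map_smul]
  -- the pairing `γ₂ : Y × M → (X →ₗ[K] M)`, `(y, m) ↦ (x ↦ μ x y • m)`
  let pair : Y → M → (X →ₗ[K] M) := fun y m =>
    { toFun := fun x => μ x y • m
      map_add' := fun x x' => by
        show μ (x + x') y • m = μ x y • m + μ x' y • m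
        rw [LinearMap.map_add₂, add_smul]
      map_smul' := fun k x => by
        show μ (k • x) y • m = k • (μ x y • m)
        rw [LinearMap.map_smul₂, smul_assoc] }
  have pair_apply : ∀ (y : Y) (m : M) (x : X), pair y m x = μ x y • m := fun y m x => rfl
  let γ₂ : Y →ₗ[K] M →ₗ[K] (X →ₗ[K] M) := LinearMap.mk₂ K pair
    (fun y y' m => by
      ext x
      rw [LinearMap.add_apply, pair_apply, pair_apply, pair_apply, map_add, add_smul])
    (fun k y m => by
      ext x
      rw [LinearMap.smul_apply, pair_apply, pair_apply, map_smul, smul_assoc])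
    (fun y m m' => by
      ext x
      rw [LinearMap.add_apply, pair_apply, pair_apply, pair_apply, smul_add])
    (fun k y m => by
      ext x
      rw [LinearMap.smul_apply, pair_apply, pair_apply, smul_comm])
  have hγ₂B : ∀ (b : B) (y : Y) (m : M), γ₂ (b • y) m = b • γ₂ y m := by
    intro b y m
    ext x
    show μ x (b • y) • m = μ (MulOpposite.op b • x) y • m
    rw [hμbal]
  have hγ₂bal : ∀ (a : A) (y : Y) (m : M),
      γ₂ (MulOpposite.op a • y) m = γ₂ y (a • m) := by
    intro a y m
    ext x
    show μ x (MulOpposite.op a • y) • m = μ x y • (a • m)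
    rw [hμr, mul_smul]
  obtain ⟨h, hh, -⟩ := huniv (X →ₗ[K] M) inferInstance inferInstance moduleBP towerKBP
    γ₂ hγ₂B hγ₂bal
  -- properties of `h`
  have hkn : ∀ (k : K) (n : N) (x : X), h (k • n) x = k • h n x := by
    intro k n x
    have e1 : k • n = algebraMap K B k • n := (algebraMap_smul (A := B) k n).symm
    rw [e1, h.map_smul, smul_def, ← MulOpposite.algebraMap_apply, algebraMap_smul,
      (h n).map_smul]
  have hbn : ∀ (b : B) (n : N) (x : X), h n (MulOpposite.op b • x) = h (b • n) x := by
    intro b n x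
    rw [h.map_smul, smul_def]
  have han : ∀ (n : N) (a : A) (x : X), h n (a • x) = a • h n x := by
    intro n
    induction hβsurj n using Submodule.span_induction with
    | mem n hnm =>
        obtain ⟨y, m, rfl⟩ := hnm
        intro a x
        rw [hh]
        show μ (a • x) y • m = a • (μ x y • m)
        rw [hμl, mul_smul]
    | zero => intro a x; rw [h.map_zero, LinearMap.zero_apply, LinearMap.zero_apply, smul_zero]
    | add u v hu hv ihu ihv =>
        intro a x
        rw [h.map_add, LinearMap.add_apply, LinearMap.add_apply, ihu, ihv, smul_add]
    | smul k u hu ih =>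
        intro a x
        rw [hkn, hkn, ih]
        exact smul_comm k a (h u x)
  -- the reverse pairing `δ₂ : X × N → M`
  let δ₂ : X →ₗ[K] N →ₗ[K] M := LinearMap.mk₂ K (fun x n => h n x)
    (fun x x' n => map_add (h n) x x')
    (fun k x n => map_smul (h n) k x)
    (fun x n n' => by
      show h (n + n') x = h n x + h n' x
      rw [h.map_add, LinearMap.add_apply])
    (fun k x n => hkn k n x)
  have hδ₂S : ∀ (a : A) (x : X) (n : N), δ₂ (a • x) n = a • δ₂ x n := fun a x n => han n a x
  have hδ₂bal : ∀ (b : B) (x : X) (n : N),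
      δ₂ (MulOpposite.op b • x) n = δ₂ x (b • n) := fun b x n => hbn b n x
  have hδ₂surj : ∀ m : M, m ∈ Submodule.span K {w : M | ∃ x n, w = δ₂ x n} := by
    intro m
    have hdec : m = ∑ t, h (β (ys t) m) (xs t) := by
      have e : ∀ t, h (β (ys t) m) (xs t) = μ (xs t) (ys t) • m := fun t => by rw [hh]; rfl
      rw [Finset.sum_congr rfl fun t _ => e t, ← Finset.sum_smul, hT, one_smul]
    rw [hdec]
    exact Submodule.sum_mem _ fun t _ => Submodule.subset_span ⟨xs t, β (ys t) m, rfl⟩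
  -- finite generating subspaces of `Y` and `X`
  obtain ⟨sY1, hsY1⟩ := hYl
  obtain ⟨sY2, hsY2⟩ := hYr
  obtain ⟨sX1, hsX1⟩ := hXl
  obtain ⟨sX2, hsX2⟩ := hXr
  set Y₀ : Submodule K Y := Submodule.span K ((sY1 ∪ sY2 : Finset Y) : Set Y) with hY₀
  have hY₀fg : Y₀.FG := ⟨sY1 ∪ sY2, rfl⟩
  set X₀ : Submodule K X := Submodule.span K ((sX1 ∪ sX2 : Finset X) : Set X) with hX₀
  have hX₀fg : X₀.FG := ⟨sX1 ∪ sX2, rfl⟩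
  have hYS : ∀ y : Y, ∃ n, y ∈ Submodule.map₂ (smulBil K B Y) (VB ^ n) Y₀ :=
    exists_level_mem VB hVB1 hVBgen Y₀ sY1
      (fun z hz => Submodule.subset_span
        (Finset.mem_coe.mpr (Finset.mem_union_left _ (Finset.mem_coe.mp hz)))) hsY1
  have hgenAop : ∀ r : Aᵐᵒᵖ, ∃ n, r ∈
      (VA.map ((MulOpposite.opLinearEquiv K : A ≃ₗ[K] Aᵐᵒᵖ) : A →ₗ[K] Aᵐᵒᵖ)) ^ n := by
    intro r
    obtain ⟨n, hn⟩ := hVAgen (MulOpposite.unop r)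
    refine ⟨n, ?_⟩
    rw [← Submodule.map_op_pow]
    exact Submodule.mem_map.mpr ⟨MulOpposite.unop r, hn, MulOpposite.op_unop r⟩
  have hgenBop : ∀ r : Bᵐᵒᵖ, ∃ n, r ∈
      (VB.map ((MulOpposite.opLinearEquiv K : B ≃ₗ[K] Bᵐᵒᵖ) : B →ₗ[K] Bᵐᵒᵖ)) ^ n := by
    intro r
    obtain ⟨n, hn⟩ := hVBgen (MulOpposite.unop r)
    refine ⟨n, ?_⟩
    rw [← Submodule.map_op_pow]
    exact Submodule.mem_map.mpr ⟨MulOpposite.unop r, hn, MulOpposite.op_unop r⟩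
  have hYR : ∀ y : Y, ∃ n, y ∈ Submodule.map₂ (smulBil K Aᵐᵒᵖ Y)
      ((VA.map ((MulOpposite.opLinearEquiv K : A ≃ₗ[K] Aᵐᵒᵖ) : A →ₗ[K] Aᵐᵒᵖ)) ^ n) Y₀ :=
    exists_level_mem (VA.map ((MulOpposite.opLinearEquiv K : A ≃ₗ[K] Aᵐᵒᵖ) : A →ₗ[K] Aᵐᵒᵖ))
      (Submodule.mem_map.mpr ⟨1, hVA1, rfl⟩) hgenAop Y₀ sY2
      (fun z hz => Submodule.subset_span
        (Finset.mem_coe.mpr (Finset.mem_union_right _ (Finset.mem_coe.mp hz)))) hsY2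
  have hXS : ∀ x : X, ∃ n, x ∈ Submodule.map₂ (smulBil K A X) (VA ^ n) X₀ :=
    exists_level_mem VA hVA1 hVAgen X₀ sX1
      (fun z hz => Submodule.subset_span
        (Finset.mem_coe.mpr (Finset.mem_union_left _ (Finset.mem_coe.mp hz)))) hsX1
  have hXR : ∀ x : X, ∃ n, x ∈ Submodule.map₂ (smulBil K Bᵐᵒᵖ X)
      ((VB.map ((MulOpposite.opLinearEquiv K : B ≃ₗ[K] Bᵐᵒᵖ) : B →ₗ[K] Bᵐᵒᵖ)) ^ n) X₀ :=
    exists_level_mem (VB.map ((MulOpposite.opLinearEquiv K : B ≃ₗ[K] Bᵐᵒᵖ) : B →ₗ[K] Bᵐᵒᵖ))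
      (Submodule.mem_map.mpr ⟨1, hVB1, rfl⟩) hgenBop X₀ sX2
      (fun z hz => Submodule.subset_span
        (Finset.mem_coe.mpr (Finset.mem_union_right _ (Finset.mem_coe.mp hz)))) hsX2
  -- the two inequalities
  have hVAfg : VA.FG := (Submodule.fg_iff_finiteDimensional VA).mpr hVAfin
  have hVBfg : VB.FG := (Submodule.fg_iff_finiteDimensional VB).mpr hVBfin
  have dir1 : gkDim K B N VB ≤ gkDim K A M VA :=
    gkDim_le_core VA hVA1 hVAfg VB hVB1 hVBfg Y₀ hY₀fg hYS hYR β hβl hβbal hβsurj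
  have dir2 : gkDim K A M VA ≤ gkDim K B N VB :=
    gkDim_le_core VB hVB1 hVBfg VA hVA1 hVAfg X₀ hX₀fg hXS hXR δ₂ hδ₂S hδ₂bal hδ₂surj
  exact le_antisymm dir2 dir1
end

section
/- Let A and B be Morita equivalent finitely generated K-algebras. Then their holonomic numbers coincide: h_A = h_B, where h_A := inf { GK(M) | M a nonzero finitely generated left A-module }. -/
universe u

/-- The holonomic number of a finitely generated algebra `A` (with standard
filtration `{V^i}`): the infimum of `GK(M)` over all nonzero finitely generated
left `A`-modules `M`. -/
noncomputable def holonomicNumber (K A : Type u) [Field K] [Ring A] [Algebra K A]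
    (V : Submodule K A) : EReal :=
  sInf {x : EReal | ∃ (M : Type u) (_ : AddCommGroup M) (_ : Module K M)
    (_ : Module A M) (_ : IsScalarTower K A M), Nontrivial M ∧
    (∃ M₀ : Submodule K M, FiniteDimensional K M₀ ∧
      ∀ m : M, ∃ n : ℕ, m ∈ modFilt K A M V M₀ n) ∧
    x = gkDim K A M V}

open Submodule MulOpposite Module TensorProduct

lemma ereal_le_coe_of_forall {x : EReal} {r : ℝ}
    (h : ∀ r' : ℝ, r < r' → x ≤ (r' : EReal)) : x ≤ (r : EReal) := by
  by_contra hc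
  push_neg at hc
  obtain ⟨z, hz1, hz2⟩ := EReal.exists_between_coe_real hc
  exact absurd (h z (by exact_mod_cast hz1)) (not_le.2 hz2)

lemma gammaDeg_le_of_le (f g : ℕ → ℕ) (C c : ℕ) (hc : 1 ≤ c)
    (h : ∀ i : ℕ, (f i : ℝ) ≤ (C : ℝ) * (g (c * i) : ℝ)) : gammaDeg f ≤ gammaDeg g := by
  apply le_sInf
  rintro x ⟨r, ⟨N, hr⟩, rfl⟩
  apply ereal_le_coe_of_forall
  intro r' hrr'
  apply sInf_le
  refine ⟨r', ?_, rfl⟩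
  have hten : Filter.Tendsto (fun i : ℕ => (i : ℝ) ^ (r' - r)) Filter.atTop Filter.atTop :=
    (tendsto_rpow_atTop (by linarith)).comp tendsto_natCast_atTop_atTop
  obtain ⟨N', hN'⟩ := (hten.eventually_ge_atTop ((C : ℝ) * (c : ℝ) ^ r)).exists_forall_of_atTop
  refine ⟨max N (max N' 1), fun i hi => ?_⟩
  have hi1 : 1 ≤ i := le_trans (le_max_right N' 1) (le_trans (le_max_right N _) hi)
  have hiN : N ≤ i := le_trans (le_max_left N _) hi
  have hiN' : N' ≤ i := le_trans (le_max_left N' 1) (le_trans (le_max_right N _) hi)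
  have hipos : (0 : ℝ) < (i : ℝ) := by exact_mod_cast hi1
  have hcpos : (0 : ℝ) < (c : ℝ) := by exact_mod_cast hc
  have h1 : (g (c * i) : ℝ) ≤ ((c * i : ℕ) : ℝ) ^ r := hr _ (le_trans hiN (Nat.le_mul_of_pos_left i (by omega)))
  have h2 : ((c * i : ℕ) : ℝ) ^ r = (c : ℝ) ^ r * (i : ℝ) ^ r := by
    push_cast
    exact Real.mul_rpow hcpos.le hipos.le
  have h3 : (f i : ℝ) ≤ (C : ℝ) * ((c : ℝ) ^ r * (i : ℝ) ^ r) := by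
    calc (f i : ℝ) ≤ (C : ℝ) * (g (c * i) : ℝ) := h i
    _ ≤ (C : ℝ) * (((c * i : ℕ) : ℝ) ^ r) := by
        exact mul_le_mul_of_nonneg_left h1 (by positivity)
    _ = _ := by rw [h2]
  have h4 : (C : ℝ) * (c : ℝ) ^ r ≤ (i : ℝ) ^ (r' - r) := hN' i hiN'
  calc (f i : ℝ) ≤ ((C : ℝ) * (c : ℝ) ^ r) * (i : ℝ) ^ r := by linarith [h3]
  _ ≤ (i : ℝ) ^ (r' - r) * (i : ℝ) ^ r := by
      exact mul_le_mul_of_nonneg_right h4 (Real.rpow_nonneg hipos.le r)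
  _ = (i : ℝ) ^ r' := by rw [← Real.rpow_add hipos]; ring_nf



section Helpers

variable {K M A : Type u} [Field K]

/-- The action of a (not nec. commutative) algebra on a `K`-module as a `K`-bilinear map. -/
def actL (K : Type u) (A M : Type u) [Field K] [Ring A] [Algebra K A]
    [AddCommGroup M] [Module K M] [Module A M] [IsScalarTower K A M] :
    A →ₗ[K] M →ₗ[K] M where
  toFun a := DistribSMul.toLinearMap K M a
  map_add' a b := LinearMap.ext fun m => add_smul a b m
  map_smul' k a := LinearMap.ext fun m => smul_assoc k a m

@[simp] lemma actL_apply {K A M : Type u} [Field K] [Ring A] [Algebra K A]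
    [AddCommGroup M] [Module K M] [Module A M] [IsScalarTower K A M] (a : A) (m : M) :
    actL K A M a m = a • m := rfl

lemma modFilt_eq_map₂_s8 {K A M : Type u} [Field K] [Ring A] [Algebra K A]
    [AddCommGroup M] [Module K M] [Module A M] [IsScalarTower K A M]
    (V : Submodule K A) (M₀ : Submodule K M) (i : ℕ) :
    modFilt K A M V M₀ i = Submodule.map₂ (actL K A M) (V ^ i) M₀ := by
  rw [map₂_eq_span_image2, modFilt]
  congr 1
  ext z
  simp only [Set.mem_setOf_eq, Set.mem_image2, actL_apply, SetLike.mem_coe]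
  constructor
  · rintro ⟨a, ha, m, hm, rfl⟩; exact ⟨a, ha, m, hm, rfl⟩
  · rintro ⟨a, ha, m, hm, rfl⟩; exact ⟨a, ha, m, hm, rfl⟩

lemma pow_mono_of_one_mem {K A : Type u} [Field K] [Ring A] [Algebra K A]
    {V : Submodule K A} (h1 : (1 : A) ∈ V) {i j : ℕ} (hij : i ≤ j) : V ^ i ≤ V ^ j := by
  induction j with
  | zero => simpa [Nat.le_zero.mp hij] using le_rfl
  | succ j ih =>
    rcases Nat.lt_or_ge i (j+1) with h | h
    · refine le_trans (ih (by omega)) ?_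
      rw [pow_succ]
      intro x hx
      simpa using Submodule.mul_mem_mul hx h1
    · have : i = j + 1 := by omega
      simp [this]

lemma modFilt_mono {K A M : Type u} [Field K] [Ring A] [Algebra K A]
    [AddCommGroup M] [Module K M] [Module A M] [IsScalarTower K A M]
    (V : Submodule K A) (M₀ : Submodule K M) (h1 : (1 : A) ∈ V) :
    Monotone (modFilt K A M V M₀) := by
  intro i j hij
  rw [modFilt_eq_map₂_s8, modFilt_eq_map₂_s8]
  exact map₂_le_map₂_left (pow_mono_of_one_mem h1 hij)

lemma exists_spanning_finset {K M : Type u} [Field K] [AddCommGroup M] [Module K M]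
    (W : Submodule K M) [FiniteDimensional K W] :
    ∃ s : Finset M, span K (s : Set M) = W ∧ s.card ≤ finrank K W := by
  classical
  let b := finBasis K W
  refine ⟨Finset.univ.image (fun j => ((b j : W) : M)), ?_, ?_⟩
  · rw [Finset.coe_image, Finset.coe_univ, Set.image_univ]
    have h : Set.range (fun j => ((b j : W) : M)) = W.subtype '' Set.range b := by
      rw [← Set.range_comp]; rfl
    rw [h, ← Submodule.map_span, b.span_eq, Submodule.map_top, Submodule.range_subtype]
  · exact Finset.card_image_le.trans (by simp)

lemma fd_map₂ {K M N P : Type u} [Field K] [AddCommGroup M] [Module K M]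
    [AddCommGroup N] [Module K N] [AddCommGroup P] [Module K P]
    (f : M →ₗ[K] N →ₗ[K] P) (p : Submodule K M) (q : Submodule K N)
    [FiniteDimensional K p] [FiniteDimensional K q] :
    FiniteDimensional K (Submodule.map₂ f p q) := by
  have hp := (Submodule.fg_iff_finiteDimensional p).2 ‹_›
  have hq := (Submodule.fg_iff_finiteDimensional q).2 ‹_›
  exact (Submodule.fg_iff_finiteDimensional _).1 (hp.map₂ f hq)

lemma finrank_map₂_le_s8 {K M N P : Type u} [Field K] [AddCommGroup M] [Module K M]
    [AddCommGroup N] [Module K N] [AddCommGroup P] [Module K P]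
    (f : M →ₗ[K] N →ₗ[K] P) (sp : Finset M) (q : Submodule K N) [FiniteDimensional K q] :
    finrank K (Submodule.map₂ f (span K (sp : Set M)) q) ≤ sp.card * finrank K q := by
  classical
  obtain ⟨sq, hsq, hcard⟩ := exists_spanning_finset q
  rw [← hsq, Submodule.map₂_span_span]
  have : Set.image2 (fun m n => f m n) (sp : Set M) (sq : Set N)
      = ((Finset.image₂ (fun m n => f m n) sp sq : Finset P) : Set P) := by
    simp [Finset.coe_image₂]
  rw [this]
  calc finrank K (span K ((Finset.image₂ (fun m n => f m n) sp sq : Finset P) : Set P))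
      ≤ (Finset.image₂ (fun m n => f m n) sp sq).card := finrank_span_finset_le_card _
    _ ≤ sp.card * sq.card := Finset.card_image₂_le _ _ _
    _ ≤ sp.card * finrank K (span K (sq : Set N)) := by rw [hsq]; exact Nat.mul_le_mul_left _ hcard

end Helpers


section Mor

variable (K A B Y M : Type u) [Field K] [Ring A] [Algebra K A] [Ring B] [Algebra K B]
  [AddCommGroup Y] [Module K Y] [Module B Y] [IsScalarTower K B Y]
  [Module Aᵐᵒᵖ Y] [SMulCommClass K Aᵐᵒᵖ Y] [SMulCommClass B Aᵐᵒᵖ Y]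
  [AddCommGroup M] [Module K M] [Module A M] [IsScalarTower K A M]

/-- The submodule of relations defining `Y ⊗[A] M` inside `Y ⊗[K] M`. -/
def morRel : Submodule K (Y ⊗[K] M) :=
  span K {t : Y ⊗[K] M | ∃ (a : A) (y : Y) (m : M),
    t = (op a • y) ⊗ₜ[K] m - y ⊗ₜ[K] (a • m)}

/-- The tensor product `Y ⊗[A] M` realized as a quotient of `Y ⊗[K] M`. -/
noncomputable def MorN : Type u := (Y ⊗[K] M) ⧸ morRel K A Y M

noncomputable instance : AddCommGroup (MorN K A Y M) :=
  inferInstanceAs (AddCommGroup ((Y ⊗[K] M) ⧸ morRel K A Y M))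
noncomputable instance : Module K (MorN K A Y M) :=
  inferInstanceAs (Module K ((Y ⊗[K] M) ⧸ morRel K A Y M))

/-- The endomorphism of `Y ⊗[K] M` induced by `b • ·` on `Y`. -/
noncomputable def morLb (b : B) : (Y ⊗[K] M) →ₗ[K] (Y ⊗[K] M) :=
  LinearMap.rTensor M (DistribSMul.toLinearMap K Y b)

lemma morLb_rel (b : B) : morRel K A Y M ≤ (morRel K A Y M).comap (morLb K B Y M b) := by
  rw [morRel, span_le]
  rintro t ⟨a, y, m, rfl⟩
  simp only [SetLike.mem_coe, mem_comap, map_sub, morLb, LinearMap.rTensor_tmul,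
    DistribSMul.toLinearMap_apply]
  rw [smul_comm b (op a) y]
  exact subset_span ⟨a, b • y, m, rfl⟩

/-- The descended endomorphism of `MorN`. -/
noncomputable def morRho (b : B) : MorN K A Y M →ₗ[K] MorN K A Y M :=
  Submodule.mapQ _ _ (morLb K B Y M b) (morLb_rel K A B Y M b)

lemma morRho_mk (b : B) (t : Y ⊗[K] M) :
    morRho K A B Y M b (Submodule.Quotient.mk t)
      = Submodule.Quotient.mk (morLb K B Y M b t) := rfl

noncomputable instance : Module B (MorN K A Y M) where
  smul b n := morRho K A B Y M b n
  one_smul n := by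
    obtain ⟨t, rfl⟩ := Submodule.Quotient.mk_surjective _ n
    show morRho K A B Y M 1 (Submodule.Quotient.mk t) = Submodule.Quotient.mk t
    rw [morRho_mk]
    congr 1
    have : DistribSMul.toLinearMap K Y (1 : B) = LinearMap.id := by
      ext y; simp
    rw [morLb, this, LinearMap.rTensor_id]; rfl
  mul_smul b b' n := by
    obtain ⟨t, rfl⟩ := Submodule.Quotient.mk_surjective _ n
    show morRho K A B Y M (b * b') (Submodule.Quotient.mk t)
      = morRho K A B Y M b (morRho K A B Y M b' (Submodule.Quotient.mk t))
    rw [morRho_mk, morRho_mk, morRho_mk]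
    congr 1
    have : DistribSMul.toLinearMap K Y (b * b')
        = (DistribSMul.toLinearMap K Y b).comp (DistribSMul.toLinearMap K Y b') := by
      ext y; simp [mul_smul]
    rw [morLb, this, LinearMap.rTensor_comp]; rfl
  smul_zero b := map_zero (morRho K A B Y M b)
  smul_add b n n' := map_add (morRho K A B Y M b) n n'
  add_smul b b' n := by
    obtain ⟨t, rfl⟩ := Submodule.Quotient.mk_surjective _ n
    show morRho K A B Y M (b + b') (Submodule.Quotient.mk t)
      = morRho K A B Y M b (Submodule.Quotient.mk t) + morRho K A B Y M b' (Submodule.Quotient.mk t)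
    rw [morRho_mk, morRho_mk, morRho_mk]
    have : DistribSMul.toLinearMap K Y (b + b')
        = DistribSMul.toLinearMap K Y b + DistribSMul.toLinearMap K Y b' := by
      ext y; simp [add_smul]
    rw [morLb, this, LinearMap.rTensor_add]
    rfl
  zero_smul n := by
    obtain ⟨t, rfl⟩ := Submodule.Quotient.mk_surjective _ n
    show morRho K A B Y M 0 (Submodule.Quotient.mk t) = 0
    rw [morRho_mk]
    have : DistribSMul.toLinearMap K Y (0 : B) = 0 := by
      ext y; simp
    rw [morLb, this, LinearMap.rTensor_zero]
    simp
    rfl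

lemma morN_smul_def (b : B) (n : MorN K A Y M) : b • n = morRho K A B Y M b n := rfl

instance : IsScalarTower K B (MorN K A Y M) := by
  constructor
  intro k b n
  obtain ⟨t, rfl⟩ := Submodule.Quotient.mk_surjective _ n
  show morRho K A B Y M (k • b) (Submodule.Quotient.mk t)
    = k • morRho K A B Y M b (Submodule.Quotient.mk t)
  erw [morRho_mk, morRho_mk, ← Submodule.Quotient.mk_smul]
  congr 1
  have h2 : DistribSMul.toLinearMap K Y (k • b)
      = k • DistribSMul.toLinearMap K Y b := by
    ext y; simp [smul_assoc]
  rw [morLb, h2, LinearMap.rTensor_smul]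
  rfl

/-- `(y, m) ↦ class of y ⊗ m` as a `K`-bilinear map into `MorN`. -/
noncomputable def morMk : Y →ₗ[K] M →ₗ[K] MorN K A Y M :=
  LinearMap.compr₂ (TensorProduct.mk K Y M) (morRel K A Y M).mkQ

lemma morMk_apply (y : Y) (m : M) :
    morMk K A Y M y m = Submodule.Quotient.mk (y ⊗ₜ[K] m) := rfl

lemma morMk_rel (a : A) (y : Y) (m : M) :
    morMk K A Y M (op a • y) m = morMk K A Y M y (a • m) := by
  erw [morMk_apply, morMk_apply, Submodule.Quotient.eq]
  exact subset_span ⟨a, y, m, rfl⟩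

lemma morMk_bsmul (b : B) (y : Y) (m : M) :
    b • morMk K A Y M y m = morMk K A Y M (b • y) m := by
  erw [morMk_apply, morN_smul_def, morRho_mk]

lemma morN_span :
    span K {n : MorN K A Y M | ∃ (y : Y) (m : M), n = morMk K A Y M y m} = ⊤ := by
  have hsur : Function.Surjective (morRel K A Y M).mkQ := Submodule.Quotient.mk_surjective _
  rw [← top_le_iff]
  intro n _
  obtain ⟨t, rfl⟩ := hsur n
  have ht : t ∈ (⊤ : Submodule K (Y ⊗[K] M)) := trivial
  rw [← TensorProduct.span_tmul_eq_top K Y M] at ht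
  have := Submodule.map_span ((morRel K A Y M).mkQ) {t : Y ⊗[K] M | ∃ m n, m ⊗ₜ n = t}
  have hmem : (morRel K A Y M).mkQ t ∈ Submodule.map ((morRel K A Y M).mkQ)
      (span K {t : Y ⊗[K] M | ∃ m n, m ⊗ₜ n = t}) := Submodule.mem_map_of_mem ht
  rw [this] at hmem
  refine span_mono ?_ hmem
  rintro z ⟨t', ⟨y, m, rfl⟩, rfl⟩
  exact ⟨y, m, rfl⟩


lemma morN_nontrivial {X : Type u} [AddCommGroup X] [Module K X]
    (μ : X →ₗ[K] Y →ₗ[K] A)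
    (hμr : ∀ (a : A) (x : X) (y : Y), μ x (op a • y) = μ x y * a)
    (hXY : span K {z : A | ∃ (x : X) (y : Y), z = μ x y} = ⊤)
    [Nontrivial M] : Nontrivial (MorN K A Y M) := by
  obtain ⟨m, hm⟩ := exists_ne (0 : M)
  by_contra hnt
  rw [not_nontrivial_iff_subsingleton] at hnt
  have hker : ∀ x : X, morRel K A Y M ≤
      LinearMap.ker (TensorProduct.lift ((actL K A M).comp (μ x))) := by
    intro x
    rw [morRel, span_le]
    rintro t ⟨a, y, m', rfl⟩
    simp only [SetLike.mem_coe, LinearMap.mem_ker, map_sub, TensorProduct.lift.tmul,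
      LinearMap.comp_apply, actL_apply]
    rw [hμr, mul_smul, sub_self]
  have hzero : ∀ (x : X) (y : Y), μ x y • m = 0 := by
    intro x y
    have hmem : (y ⊗ₜ[K] m : Y ⊗[K] M) ∈ morRel K A Y M := by
      rw [← Submodule.Quotient.mk_eq_zero]
      exact hnt.elim _ _
    have := hker x hmem
    rw [LinearMap.mem_ker] at this
    simpa [actL_apply] using this
  have hsub : span K {z : A | ∃ (x : X) (y : Y), z = μ x y}
      ≤ LinearMap.ker ((actL K A M).flip m) := by
    rw [span_le]
    rintro z ⟨x, y, rfl⟩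
    simp only [SetLike.mem_coe, LinearMap.mem_ker, LinearMap.flip_apply, actL_apply]
    exact hzero x y
  rw [hXY] at hsub
  have h2 := hsub (Submodule.mem_top (x := (1 : A)))
  rw [LinearMap.mem_ker] at h2
  simp only [LinearMap.flip_apply, actL_apply, one_smul] at h2
  exact hm h2


end Mor

-- ===== generic modFilt helpers =====
section FiltHelpers

variable {K A M : Type u} [Field K] [Ring A] [Algebra K A]
  [AddCommGroup M] [Module K M] [Module A M] [IsScalarTower K A M]

lemma modFilt_le_iff (V : Submodule K A) (M₀ : Submodule K M) (i : ℕ) {p : Submodule K M} :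
    modFilt K A M V M₀ i ≤ p ↔ ∀ a ∈ V ^ i, ∀ m ∈ M₀, a • m ∈ p := by
  rw [modFilt, Submodule.span_le]
  constructor
  · intro h a ha m hm; exact h ⟨a, ha, m, hm, rfl⟩
  · rintro h w ⟨a, ha, m, hm, rfl⟩; exact h a ha m hm

lemma smul_mem_modFilt (V : Submodule K A) (M₀ : Submodule K M) (i : ℕ) {a : A} {m : M}
    (ha : a ∈ V ^ i) (hm : m ∈ M₀) : a • m ∈ modFilt K A M V M₀ i :=
  subset_span ⟨a, ha, m, hm, rfl⟩

lemma le_modFilt_zero (V : Submodule K A) (M₀ : Submodule K M) {m : M} (hm : m ∈ M₀) :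
    m ∈ modFilt K A M V M₀ 0 := by
  apply subset_span
  refine ⟨1, ?_, m, hm, (one_smul A m).symm⟩
  rw [pow_zero]
  exact Submodule.one_le.mp le_rfl

lemma modFilt_smul_mem (V : Submodule K A) (M₀ : Submodule K M) (l i : ℕ) (a : A)
    (ha : a ∈ V ^ l) {m : M} (hm : m ∈ modFilt K A M V M₀ i) :
    a • m ∈ modFilt K A M V M₀ (i + l) := by
  have hle : modFilt K A M V M₀ i ≤
      (modFilt K A M V M₀ (i + l)).comap (DistribSMul.toLinearMap K M a) := by
    rw [modFilt_le_iff]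
    intro a' ha' m' hm'
    simp only [mem_comap, DistribSMul.toLinearMap_apply]
    rw [← mul_smul]
    refine smul_mem_modFilt V M₀ (i + l) ?_ hm'
    rw [Nat.add_comm i l, pow_add]
    exact Submodule.mul_mem_mul ha ha'
  exact hle hm

end FiltHelpers

section MorKey

variable (K A B Y M : Type u) [Field K] [Ring A] [Algebra K A] [Ring B] [Algebra K B]
  [AddCommGroup Y] [Module K Y] [Module B Y] [IsScalarTower K B Y]
  [Module Aᵐᵒᵖ Y] [SMulCommClass K Aᵐᵒᵖ Y] [SMulCommClass B Aᵐᵒᵖ Y]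
  [AddCommGroup M] [Module K M] [Module A M] [IsScalarTower K A M]

local instance : SMulCommClass Aᵐᵒᵖ K Y := SMulCommClass.symm _ _ _

/-- `G j = span of (VA^j)ᵒᵖ • F` inside `Y`. -/
def morG (VA : Submodule K A) (F : Submodule K Y) (j : ℕ) : Submodule K Y :=
  span K {w : Y | ∃ a ∈ VA ^ j, ∃ y ∈ F, w = op a • y}

lemma morG_le_iff (VA : Submodule K A) (F : Submodule K Y) (j : ℕ) {p : Submodule K Y} :
    morG K A Y VA F j ≤ p ↔ ∀ a ∈ VA ^ j, ∀ y ∈ F, op a • y ∈ p := by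
  rw [morG, Submodule.span_le]
  constructor
  · intro h a ha y hy; exact h ⟨a, ha, y, hy, rfl⟩
  · rintro h w ⟨a, ha, y, hy, rfl⟩; exact h a ha y hy

lemma morG_mono (VA : Submodule K A) (F : Submodule K Y) (hVA1 : (1 : A) ∈ VA)
    {i j : ℕ} (hij : i ≤ j) : morG K A Y VA F i ≤ morG K A Y VA F j := by
  rw [morG_le_iff]
  intro a ha y hy
  exact subset_span ⟨a, pow_mono_of_one_mem hVA1 hij ha, y, hy, rfl⟩

lemma le_morG_zero (VA : Submodule K A) (F : Submodule K Y) {y : Y} (hy : y ∈ F) :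
    y ∈ morG K A Y VA F 0 := by
  apply subset_span
  refine ⟨1, ?_, y, hy, by simp⟩
  rw [pow_zero]
  exact Submodule.one_le.mp le_rfl

lemma morG_smul_mem (VA : Submodule K A) (F : Submodule K Y) (l : ℕ) (a : A)
    (ha : a ∈ VA ^ l) (j : ℕ) {w : Y} (hw : w ∈ morG K A Y VA F j) :
    op a • w ∈ morG K A Y VA F (j + l) := by
  have hle : morG K A Y VA F j ≤
      (morG K A Y VA F (j + l)).comap (DistribSMul.toLinearMap K Y (op a)) := by
    rw [morG_le_iff]
    intro a' ha' y hy
    simp only [mem_comap, DistribSMul.toLinearMap_apply]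
    have heq : op a • op a' • y = op (a' * a) • y := by rw [← mul_smul, ← op_mul]
    rw [heq]
    apply subset_span
    exact ⟨a' * a, by rw [pow_add]; exact Submodule.mul_mem_mul ha' ha, y, hy, rfl⟩
  exact hle hw

lemma morG_cover (VA : Submodule K A) (F : Submodule K Y) (hVA1 : (1 : A) ∈ VA)
    (hVAgen : ∀ a : A, ∃ n : ℕ, a ∈ VA ^ n)
    (sr : Finset Y) (hsr : span Aᵐᵒᵖ (sr : Set Y) = ⊤) (hsrF : (sr : Set Y) ⊆ (F : Set Y)) :
    ∀ y : Y, ∃ j, y ∈ morG K A Y VA F j := by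
  intro y
  have hy : y ∈ span Aᵐᵒᵖ (sr : Set Y) := by rw [hsr]; exact mem_top
  induction hy using span_induction with
  | mem y' hy' => exact ⟨0, le_morG_zero K A Y VA F (hsrF hy')⟩
  | zero => exact ⟨0, zero_mem _⟩
  | add y' z' _ _ ihy ihz =>
    obtain ⟨j1, h1⟩ := ihy
    obtain ⟨j2, h2⟩ := ihz
    exact ⟨max j1 j2, add_mem (morG_mono K A Y VA F hVA1 (le_max_left _ _) h1)
      (morG_mono K A Y VA F hVA1 (le_max_right _ _) h2)⟩
  | smul a y' _ ih =>
    obtain ⟨j, hj⟩ := ih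
    obtain ⟨l, hl⟩ := hVAgen (unop a)
    refine ⟨j + l, ?_⟩
    have := morG_smul_mem K A Y VA F l (unop a) hl j hj
    simpa using this

lemma morita_key
    (VA : Submodule K A) (hVA1 : (1 : A) ∈ VA) (hVAfin : FiniteDimensional K VA)
    (hVAgen : ∀ a : A, ∃ n : ℕ, a ∈ VA ^ n)
    (VB : Submodule K B) (hVB1 : (1 : B) ∈ VB) (hVBfin : FiniteDimensional K VB)
    (hVBgen : ∀ b : B, ∃ n : ℕ, b ∈ VB ^ n)
    (hYl : ∃ s : Finset Y, span B (s : Set Y) = ⊤)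
    (hYr : ∃ s : Finset Y, span Aᵐᵒᵖ (s : Set Y) = ⊤)
    (M₀ : Submodule K M) (hM₀fd : FiniteDimensional K M₀)
    (hM₀gen : ∀ m : M, ∃ n : ℕ, m ∈ modFilt K A M VA M₀ n) :
    ∃ N₀ : Submodule K (MorN K A Y M), FiniteDimensional K N₀ ∧
      (∀ n : MorN K A Y M, ∃ i : ℕ, n ∈ modFilt K B (MorN K A Y M) VB N₀ i) ∧
      ∃ C c : ℕ, 1 ≤ c ∧ ∀ i : ℕ,
        finrank K (modFilt K B (MorN K A Y M) VB N₀ i)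
          ≤ C * finrank K (modFilt K A M VA M₀ (c * i)) := by
  classical
  haveI := hM₀fd
  obtain ⟨sl, hsl⟩ := hYl
  obtain ⟨sr, hsr⟩ := hYr
  obtain ⟨sb, hsb, -⟩ := exists_spanning_finset VB
  set sf : Finset Y := sl ∪ sr with hsfdef
  set F : Submodule K Y := span K (sf : Set Y) with hFdef
  have hslF : ∀ y ∈ sl, y ∈ F :=
    fun y hy => subset_span (Finset.mem_coe.2 (Finset.mem_union_left _ hy))
  have hsrF : (sr : Set Y) ⊆ (F : Set Y) :=
    fun y hy => subset_span (Finset.mem_coe.2 (Finset.mem_union_right _ (Finset.mem_coe.1 hy)))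
  haveI hFfd : FiniteDimensional K F := by rw [hFdef]; infer_instance
  set N₀ : Submodule K (MorN K A Y M) := Submodule.map₂ (morMk K A Y M) F M₀ with hN₀def
  haveI hN₀fd : FiniteDimensional K N₀ := by rw [hN₀def]; exact fd_map₂ _ _ _
  -- structure constant c
  have hcover := morG_cover K A Y VA F hVA1 hVAgen sr hsr hsrF
  have hchoice : ∀ p : B × Y, ∃ j, (p.1 • p.2 : Y) ∈ morG K A Y VA F j := fun p => hcover _
  choose jf hjf using hchoice
  set c : ℕ := max 1 ((sb ×ˢ sf).sup jf) with hcdef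
  have hc1 : 1 ≤ c := le_max_left _ _
  have hbase : Submodule.map₂ (actL K B Y) VB F ≤ morG K A Y VA F c := by
    rw [← hsb, hFdef, Submodule.map₂_span_span]
    apply Submodule.span_le.2
    rintro w ⟨b, hb, y, hy, rfl⟩
    refine morG_mono K A Y VA F hVA1 ?_ (hjf (b, y))
    exact le_trans (Finset.le_sup (Finset.mem_product.2 ⟨Finset.mem_coe.1 hb, Finset.mem_coe.1 hy⟩))
      (le_max_right _ _)
  have hstepb : ∀ b ∈ VB, ∀ (j : ℕ), ∀ w ∈ morG K A Y VA F j,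
      b • w ∈ morG K A Y VA F (j + c) := by
    intro b hb j
    have hle : morG K A Y VA F j ≤
        (morG K A Y VA F (j + c)).comap (DistribSMul.toLinearMap K Y b) := by
      rw [morG_le_iff]
      intro a ha y hy
      simp only [mem_comap, DistribSMul.toLinearMap_apply]
      rw [smul_comm b (op a) y]
      have hby : b • y ∈ morG K A Y VA F c := hbase (apply_mem_map₂ _ hb hy)
      have h2 := morG_smul_mem K A Y VA F j a ha c hby
      rwa [Nat.add_comm c j] at h2
    exact fun w hw => hle hw
  have hpow : ∀ (i : ℕ), ∀ b ∈ VB ^ i, ∀ (j : ℕ), ∀ w ∈ morG K A Y VA F j,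
      b • w ∈ morG K A Y VA F (j + c * i) := by
    intro i
    induction i with
    | zero =>
      intro b hb j w hw
      rw [pow_zero] at hb
      obtain ⟨k, rfl⟩ := Submodule.mem_one.1 hb
      rw [Nat.mul_zero, Nat.add_zero, algebraMap_smul]
      exact Submodule.smul_mem _ k hw
    | succ i ih =>
      intro b hb j w hw
      have hle : VB ^ (i + 1) ≤
          (morG K A Y VA F (j + c * (i + 1))).comap ((actL K B Y).flip w) := by
        rw [pow_succ]
        apply Submodule.mul_le.2
        intro v hv u hu
        simp only [mem_comap, LinearMap.flip_apply, actL_apply]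
        rw [mul_smul]
        have h1 : u • w ∈ morG K A Y VA F (j + c) := hstepb u hu j w hw
        have h2 := ih v hv (j + c) _ h1
        have heq : j + c + c * i = j + c * (i + 1) := by ring
        rwa [heq] at h2
      exact hle hb
  -- Claim A: comparison of filtrations
  have hclaimA : ∀ i : ℕ, modFilt K B (MorN K A Y M) VB N₀ i ≤
      Submodule.map₂ (morMk K A Y M) F (modFilt K A M VA M₀ (c * i)) := by
    intro i
    rw [modFilt_le_iff]
    intro b hb n hn
    have hle : N₀ ≤ (Submodule.map₂ (morMk K A Y M) F (modFilt K A M VA M₀ (c * i))).comap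
        (DistribSMul.toLinearMap K (MorN K A Y M) b) := by
      rw [hN₀def]
      apply Submodule.map₂_le.2
      intro y hy m hm
      simp only [mem_comap, DistribSMul.toLinearMap_apply]
      rw [morMk_bsmul]
      have hby : b • y ∈ morG K A Y VA F (c * i) := by
        have h3 := hpow i b hb 0 y (le_morG_zero K A Y VA F hy)
        rwa [Nat.zero_add] at h3
      have hmap : morG K A Y VA F (c * i) ≤
          (Submodule.map₂ (morMk K A Y M) F (modFilt K A M VA M₀ (c * i))).comap
            ((morMk K A Y M).flip m) := by
        rw [morG_le_iff]
        intro a ha y' hy'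
        simp only [mem_comap, LinearMap.flip_apply]
        rw [morMk_rel]
        exact apply_mem_map₂ _ hy' (smul_mem_modFilt VA M₀ (c * i) ha hm)
      have h4 := hmap hby
      simpa using h4
    exact hle hn
  -- generation
  have hdirS : Monotone (modFilt K B (MorN K A Y M) VB N₀) := modFilt_mono VB N₀ hVB1
  set T : Submodule K (MorN K A Y M) := ⨆ i, modFilt K B (MorN K A Y M) VB N₀ i with hTdef
  have hmemT : ∀ n : MorN K A Y M,
      n ∈ T ↔ ∃ i, n ∈ modFilt K B (MorN K A Y M) VB N₀ i := by
    intro n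
    rw [hTdef]
    exact Submodule.mem_iSup_of_directed _ hdirS.directed_le
  have hstep1 : ∀ y : Y, ∀ m ∈ M₀, morMk K A Y M y m ∈ T := by
    intro y
    have hy : y ∈ span B (sl : Set Y) := by rw [hsl]; exact mem_top
    induction hy using span_induction with
    | mem y' hy' =>
      intro m hm
      rw [hmemT]
      exact ⟨0, le_modFilt_zero VB N₀ (by rw [hN₀def]; exact apply_mem_map₂ _ (hslF y' hy') hm)⟩
    | zero =>
      intro m hm
      rw [map_zero, LinearMap.zero_apply]
      exact zero_mem T
    | add y' z' _ _ ihy ihz =>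
      intro m hm
      rw [map_add, LinearMap.add_apply]
      exact add_mem (ihy m hm) (ihz m hm)
    | smul b y' _ ih =>
      intro m hm
      obtain ⟨l, hl⟩ := hVBgen b
      have h0 := ih m hm
      rw [hmemT] at h0 ⊢
      obtain ⟨i, hi⟩ := h0
      refine ⟨i + l, ?_⟩
      rw [← morMk_bsmul]
      exact modFilt_smul_mem VB N₀ l i b hl hi
  have hstep2 : ∀ (y : Y) (m : M), morMk K A Y M y m ∈ T := by
    intro y m
    obtain ⟨j, hj⟩ := hM₀gen m
    have hle : modFilt K A M VA M₀ j ≤ T.comap (morMk K A Y M y) := by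
      rw [modFilt_le_iff]
      intro a ha m' hm'
      simp only [mem_comap]
      rw [← morMk_rel]
      exact hstep1 _ m' hm'
    exact hle hj
  have hNgen : ∀ n : MorN K A Y M, ∃ i, n ∈ modFilt K B (MorN K A Y M) VB N₀ i := by
    intro n
    rw [← hmemT]
    have hall : span K {n : MorN K A Y M | ∃ (y : Y) (m : M), n = morMk K A Y M y m} ≤ T := by
      apply Submodule.span_le.2
      rintro n' ⟨y, m, rfl⟩
      exact hstep2 y m
    rw [morN_span K A Y M] at hall
    exact hall mem_top
  refine ⟨N₀, hN₀fd, hNgen, sf.card, c, hc1, fun i => ?_⟩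
  haveI hfdVA : FiniteDimensional K (VA ^ (c * i) : Submodule K A) :=
    (Submodule.fg_iff_finiteDimensional _).1
      (Submodule.FG.pow ((Submodule.fg_iff_finiteDimensional _).2 hVAfin) _)
  haveI hfdW : FiniteDimensional K (modFilt K A M VA M₀ (c * i)) := by
    rw [modFilt_eq_map₂_s8]
    exact fd_map₂ _ _ _
  haveI hfdR : FiniteDimensional K
      (Submodule.map₂ (morMk K A Y M) F (modFilt K A M VA M₀ (c * i))) := fd_map₂ _ _ _
  calc finrank K (modFilt K B (MorN K A Y M) VB N₀ i)
      ≤ finrank K (Submodule.map₂ (morMk K A Y M) F (modFilt K A M VA M₀ (c * i))) :=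
        Submodule.finrank_mono (hclaimA i)
    _ ≤ sf.card * finrank K (modFilt K A M VA M₀ (c * i)) := by
        rw [hFdef]
        exact finrank_map₂_le_s8 _ _ _

end MorKey

section Assemble

lemma holonomic_le (K A B X Y : Type u)
    [Field K] [Ring A] [Algebra K A] [Ring B] [Algebra K B]
    (VA : Submodule K A) (hVA1 : (1 : A) ∈ VA) (hVAfin : FiniteDimensional K VA)
    (hVAgen : ∀ a : A, ∃ n : ℕ, a ∈ VA ^ n)
    (VB : Submodule K B) (hVB1 : (1 : B) ∈ VB) (hVBfin : FiniteDimensional K VB)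
    (hVBgen : ∀ a : B, ∃ n : ℕ, a ∈ VB ^ n)
    [AddCommGroup X] [Module K X]
    [AddCommGroup Y] [Module K Y] [Module B Y] [IsScalarTower K B Y]
    [Module Aᵐᵒᵖ Y] [SMulCommClass K Aᵐᵒᵖ Y] [SMulCommClass B Aᵐᵒᵖ Y]
    (μ : X →ₗ[K] Y →ₗ[K] A)
    (hμr : ∀ (a : A) (x : X) (y : Y), μ x (MulOpposite.op a • y) = μ x y * a)
    (hXY : Submodule.span K {z : A | ∃ (x : X) (y : Y), z = μ x y} = ⊤)
    (hYl : ∃ s : Finset Y, Submodule.span B (s : Set Y) = ⊤)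
    (hYr : ∃ s : Finset Y, Submodule.span Aᵐᵒᵖ (s : Set Y) = ⊤) :
    holonomicNumber K B VB ≤ holonomicNumber K A VA := by
  apply le_sInf
  rintro x ⟨M, iAG, iMK, iMA, iT, hx⟩
  letI := iAG; letI := iMK; letI := iMA; letI := iT
  obtain ⟨hMnt, ⟨M₀g, hM₀gfd, hM₀ggen⟩, rfl⟩ := hx
  haveI := hMnt
  haveI : Nontrivial (MorN K A Y M) := morN_nontrivial K A Y M μ hμr hXY
  obtain ⟨N₀g, hN₀gfd, hN₀ggen, -⟩ :=
    morita_key K A B Y M VA hVA1 hVAfin hVAgen VB hVB1 hVBfin hVBgen hYl hYr M₀g hM₀gfd hM₀ggen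
  have h1 : holonomicNumber K B VB ≤ gkDim K B (MorN K A Y M) VB :=
    sInf_le ⟨MorN K A Y M, inferInstance, inferInstance, inferInstance, inferInstance,
      inferInstance, ⟨N₀g, hN₀gfd, hN₀ggen⟩, rfl⟩
  refine le_trans h1 ?_
  apply le_sInf
  rintro v ⟨M₀, hM₀fd, hM₀gen, rfl⟩
  obtain ⟨N₀, hN₀fd, hN₀gen, C, c, hc1, hbound⟩ :=
    morita_key K A B Y M VA hVA1 hVAfin hVAgen VB hVB1 hVBfin hVBgen hYl hYr M₀ hM₀fd hM₀gen
  have h2 : gkDim K B (MorN K A Y M) VB ≤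
      gammaDeg fun i => finrank K (modFilt K B (MorN K A Y M) VB N₀ i) :=
    sInf_le ⟨N₀, hN₀fd, hN₀gen, rfl⟩
  refine le_trans h2 ?_
  apply gammaDeg_le_of_le _ _ C c hc1
  intro i
  exact_mod_cast hbound i

end Assemble

/-- **Morita invariance of the holonomic number.** Let `A` and `B` be Morita
equivalent finitely generated `K`-algebras, the equivalence provided by a Morita
context `(A, X; Y, B)` with `XY = A` and `YX = B`. Then `h_A = h_B`, where
`h_A = inf { GK(M) | M ≠ 0 a finitely generated left A-module }`. -/
theorem holonomicNumber_morita_invariant (K A B X Y : Type u)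
    [Field K] [Ring A] [Algebra K A] [Ring B] [Algebra K B]
    -- `A` is a finitely generated algebra with standard filtration `{VA^i}`
    (VA : Submodule K A) (hVA1 : (1 : A) ∈ VA) (hVAfin : FiniteDimensional K VA)
    (hVAgen : ∀ a : A, ∃ n : ℕ, a ∈ VA ^ n)
    -- `B` is a finitely generated algebra with standard filtration `{VB^i}`
    (VB : Submodule K B) (hVB1 : (1 : B) ∈ VB) (hVBfin : FiniteDimensional K VB)
    (hVBgen : ∀ a : B, ∃ n : ℕ, a ∈ VB ^ n)
    -- `X` is an `(A,B)`-bimodule, `Y` is a `(B,A)`-bimodule, both compatible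
    -- with the `K`-structures
    [AddCommGroup X] [Module K X] [Module A X] [IsScalarTower K A X]
    [Module Bᵐᵒᵖ X] [SMulCommClass K Bᵐᵒᵖ X] [SMulCommClass A Bᵐᵒᵖ X]
    [AddCommGroup Y] [Module K Y] [Module B Y] [IsScalarTower K B Y]
    [Module Aᵐᵒᵖ Y] [SMulCommClass K Aᵐᵒᵖ Y] [SMulCommClass B Aᵐᵒᵖ Y]
    -- the multiplication maps of the Morita context, as `K`-bilinear maps
    (μ : X →ₗ[K] Y →ₗ[K] A) (ν : Y →ₗ[K] X →ₗ[K] B)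
    -- `μ` is an `(A,A)`-bimodule map, balanced over `B`
    (hμl : ∀ (a : A) (x : X) (y : Y), μ (a • x) y = a * μ x y)
    (hμr : ∀ (a : A) (x : X) (y : Y), μ x (MulOpposite.op a • y) = μ x y * a)
    (hμbal : ∀ (b : B) (x : X) (y : Y), μ (MulOpposite.op b • x) y = μ x (b • y))
    -- `ν` is a `(B,B)`-bimodule map, balanced over `A`
    (hνl : ∀ (b : B) (y : Y) (x : X), ν (b • y) x = b * ν y x)
    (hνr : ∀ (b : B) (y : Y) (x : X), ν y (MulOpposite.op b • x) = ν y x * b)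
    (hνbal : ∀ (a : A) (y : Y) (x : X), ν (MulOpposite.op a • y) x = ν y (a • x))
    -- the associativity axioms of the Morita context
    (hass1 : ∀ (x x' : X) (y : Y), μ x y • x' = MulOpposite.op (ν y x') • x)
    (hass2 : ∀ (y y' : Y) (x : X), ν y x • y' = MulOpposite.op (μ x y') • y)
    -- `XY = A` and `YX = B`
    (hXY : Submodule.span K {z : A | ∃ (x : X) (y : Y), z = μ x y} = ⊤)
    (hYX : Submodule.span K {z : B | ∃ (y : Y) (x : X), z = ν y x} = ⊤)
    -- `X` and `Y` are finitely generated on each side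
    (hXl : ∃ s : Finset X, Submodule.span A (s : Set X) = ⊤)
    (hXr : ∃ s : Finset X, Submodule.span Bᵐᵒᵖ (s : Set X) = ⊤)
    (hYl : ∃ s : Finset Y, Submodule.span B (s : Set Y) = ⊤)
    (hYr : ∃ s : Finset Y, Submodule.span Aᵐᵒᵖ (s : Set Y) = ⊤)
 :
    holonomicNumber K A VA = holonomicNumber K B VB := by
  apply le_antisymm
  · exact holonomic_le K B A Y X VB hVB1 hVBfin hVBgen VA hVA1 hVAfin hVAgen
      ν hνr hYX hXl hXr
  · exact holonomic_le K A B X Y VA hVA1 hVAfin hVAgen VB hVB1 hVBfin hVBgen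
      μ hμr hXY hYl hYr
end

section
/- Let A be an algebra with unit, and suppose 1 ∈ B_d Y₀ X₀ B_d for subspaces B_d, Y₀, X₀ of appropriate (bi)modules in a Morita context, and for a nonzero a ∈ A we have 1_A ∈ A_j a A_j. If Y₀ A_j ⊆ B_{cj} Y₀ and A_j X₀ ⊆ X₀ B_{cj}, then 1_B ∈ B_{cj+d} Y₀ a X₀ B_{cj+d}. -/
/-!
Write `1_A = ∑ pᵢ a qᵢ` with `pᵢ, qᵢ ∈ A_j`. For `y ∈ Y₀`, `x ∈ X₀` the balancing identity gives
`ν y x = ∑ ν (y pᵢ) (a qᵢ x)`, and `y pᵢ ∈ B_{cj} Y₀`, `qᵢ x ∈ X₀ B_{cj}`; since `ν` is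
`B`-linear on both sides this puts `Y₀ X₀` inside `B_{cj} (Y₀ a X₀) B_{cj}`. Substituting into
`1_B ∈ B_d Y₀ X₀ B_d` and using `B_d B_{cj} ⊆ B_{cj+d}` gives the claim.
-/

open Submodule MulOpposite

theorem Submodule.mul_span_singleton_mul_le {R A : Type*} [CommSemiring R] [Semiring A]
    [Algebra R A] {P Q N : Submodule R A} {a : A}
    (h : ∀ p ∈ P, ∀ q ∈ Q, p * a * q ∈ N) : P * span R {a} * Q ≤ N := by
  rw [mul_le]
  intro m hm q hq
  obtain ⟨p, hp, rfl⟩ := mem_mul_span_singleton.mp hm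
  exact h p hp q hq

theorem Submodule.span_setOf_apply_eq_map₂ {R M N P : Type*} [CommSemiring R]
    [AddCommMonoid M] [AddCommMonoid N] [AddCommMonoid P] [Module R M] [Module R N] [Module R P]
    (f : M →ₗ[R] N →ₗ[R] P) (p : Submodule R M) (q : Submodule R N) :
    span R {z : P | ∃ m ∈ p, ∃ n ∈ q, z = f m n} = map₂ f p q := by
  rw [map₂_eq_span_image2]
  congr 1
  ext z
  simp [Set.mem_image2, eq_comm]

section Pairing

variable {K B X Y : Type*} [CommSemiring K] [Semiring B] [Algebra K B]
  [AddCommMonoid X] [Module K X] [Module Bᵐᵒᵖ X] [AddCommMonoid Y] [Module K Y] [Module B Y]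

theorem Submodule.map₂_span_smul_le_mul_mul (f : Y →ₗ[K] X →ₗ[K] B)
    (hl : ∀ (b : B) y x, f (b • y) x = b * f y x)
    (hr : ∀ (b : B) y x, f y (op b • x) = f y x * b)
    (P Q : Submodule K B) (Y₀ : Submodule K Y) (X₀ : Submodule K X) :
    map₂ f (span K {z : Y | ∃ b ∈ P, ∃ y ∈ Y₀, z = b • y})
      (span K {z : X | ∃ b ∈ Q, ∃ x ∈ X₀, z = op b • x}) ≤ P * map₂ f Y₀ X₀ * Q := by
  rw [map₂_span_span, span_le]
  rintro _ ⟨_, ⟨b, hb, y, hy, rfl⟩, _, ⟨b', hb', x, hx, rfl⟩, rfl⟩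
  dsimp only
  rw [hl, hr, ← mul_assoc]
  exact mul_mem_mul (mul_mem_mul hb (apply_mem_map₂ f hy hx)) hb'

end Pairing

section TwistedPairing

variable {K A B X Y : Type*} [CommSemiring K] [Semiring A] [Algebra K A] [Semiring B]
  [Algebra K B] [AddCommMonoid X] [Module K X] [Module A X] [IsScalarTower K A X]
  [AddCommMonoid Y] [Module K Y]

/-- The paper's `Y₀ a X₀` is `map₂ (twistedPairing ν a) Y₀ X₀`. -/
def twistedPairing (ν : Y →ₗ[K] X →ₗ[K] B) (a : A) : Y →ₗ[K] X →ₗ[K] B :=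
  ν.compl₂ (Algebra.lsmul K K X a)

@[simp]
theorem twistedPairing_apply (ν : Y →ₗ[K] X →ₗ[K] B) (a : A) (y : Y) (x : X) :
    twistedPairing ν a y x = ν y (a • x) :=
  rfl

theorem twistedPairing_smul_left [Module B Y] {ν : Y →ₗ[K] X →ₗ[K] B}
    (hνl : ∀ (b : B) (y : Y) (x : X), ν (b • y) x = b * ν y x) (a : A) (b : B) (y : Y) (x : X) :
    twistedPairing ν a (b • y) x = b * twistedPairing ν a y x :=
  hνl b y (a • x)

theorem twistedPairing_op_smul_right [Module Bᵐᵒᵖ X] [Module Aᵐᵒᵖ Y] {ν : Y →ₗ[K] X →ₗ[K] B}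
    (hνr : ∀ (b : B) (y : Y) (x : X), ν y (op b • x) = ν y x * b)
    (hνbal : ∀ (a : A) (y : Y) (x : X), ν (op a • y) x = ν y (a • x))
    (a : A) (b : B) (y : Y) (x : X) :
    twistedPairing ν a y (op b • x) = twistedPairing ν a y x * b := by
  simp only [twistedPairing_apply, ← hνbal, hνr]

theorem span_setOf_op_smul_eq_map₂_twistedPairing [Module Aᵐᵒᵖ Y] {ν : Y →ₗ[K] X →ₗ[K] B}
    (hνbal : ∀ (a : A) (y : Y) (x : X), ν (op a • y) x = ν y (a • x))
    (a : A) (Y₀ : Submodule K Y) (X₀ : Submodule K X) :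
    span K {z : B | ∃ y ∈ Y₀, ∃ x ∈ X₀, z = ν (op a • y) x} = map₂ (twistedPairing ν a) Y₀ X₀ := by
  simp only [hνbal, ← twistedPairing_apply, span_setOf_apply_eq_map₂]

theorem map₂_le_mul_map₂_twistedPairing_mul [Module B Y] [Module Bᵐᵒᵖ X] [Module Aᵐᵒᵖ Y]
    {ν : Y →ₗ[K] X →ₗ[K] B} (hνl : ∀ (b : B) (y : Y) (x : X), ν (b • y) x = b * ν y x)
    (hνr : ∀ (b : B) (y : Y) (x : X), ν y (op b • x) = ν y x * b)
    (hνbal : ∀ (a : A) (y : Y) (x : X), ν (op a • y) x = ν y (a • x))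
    {P : Submodule K A} {Q : Submodule K B} {a : A}
    (Y₀ : Submodule K Y) (X₀ : Submodule K X) (h1 : (1 : A) ∈ P * span K {a} * P)
    (hYP : span K {z : Y | ∃ a' ∈ P, ∃ y ∈ Y₀, z = op a' • y} ≤
      span K {z : Y | ∃ b ∈ Q, ∃ y ∈ Y₀, z = b • y})
    (hPX : span K {z : X | ∃ a' ∈ P, ∃ x ∈ X₀, z = a' • x} ≤
      span K {z : X | ∃ b ∈ Q, ∃ x ∈ X₀, z = op b • x}) :
    map₂ ν Y₀ X₀ ≤ Q * map₂ (twistedPairing ν a) Y₀ X₀ * Q := by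
  refine map₂_le.mpr fun y hy x hx => ?_
  set evalAt : A →ₗ[K] B := (ν y).comp ((LinearMap.toSpanSingleton A X x).restrictScalars K)
  have hsplit (p q : A) : evalAt (p * a * q) = twistedPairing ν a (op p • y) (q • x) := by
    simp [evalAt, mul_smul, hνbal]
  have heval_one : evalAt 1 = ν y x := by simp [evalAt]
  rw [← heval_one, ← mem_comap]
  refine mul_span_singleton_mul_le (fun p hp q hq => ?_) h1
  rw [mem_comap, hsplit]
  exact map₂_span_smul_le_mul_mul _ (twistedPairing_smul_left hνl a)
    (twistedPairing_op_smul_right hνr hνbal a) _ _ Y₀ X₀ <| apply_mem_map₂ _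
      (hYP (subset_span ⟨p, hp, y, hy, rfl⟩)) (hPX (subset_span ⟨q, hq, x, hx, rfl⟩))

end TwistedPairing

theorem one_mem_filtration_pairing_general
    (K A B X Y : Type*) [Field K] [Ring A] [Algebra K A] [Ring B] [Algebra K B]
    [AddCommGroup X] [Module K X] [Module A X] [IsScalarTower K A X]
    [Module Bᵐᵒᵖ X] [AddCommGroup Y] [Module K Y] [Module B Y] [Module Aᵐᵒᵖ Y]
    (ν : Y →ₗ[K] X →ₗ[K] B)
    (hνl : ∀ (b : B) (y : Y) (x : X), ν (b • y) x = b * ν y x)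
    (hνr : ∀ (b : B) (y : Y) (x : X), ν y (MulOpposite.op b • x) = ν y x * b)
    (hνbal : ∀ (a : A) (y : Y) (x : X), ν (MulOpposite.op a • y) x = ν y (a • x))
    (Af : ℕ → Submodule K A) (Bf : ℕ → Submodule K B)
    (hBmul : ∀ i j, Bf i * Bf j ≤ Bf (i + j))
    (X₀ : Submodule K X) (Y₀ : Submodule K Y)
    (c d j : ℕ) (a : A)
    (h1B : (1 : B) ∈ Bf d * Submodule.span K {z : B | ∃ y ∈ Y₀, ∃ x ∈ X₀, z = ν y x} * Bf d)
    (h1A : (1 : A) ∈ Af j * Submodule.span K {a} * Af j)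
    (hYA : Submodule.span K {z : Y | ∃ a' ∈ Af j, ∃ y ∈ Y₀, z = MulOpposite.op a' • y} ≤
      Submodule.span K {z : Y | ∃ b ∈ Bf (c * j), ∃ y ∈ Y₀, z = b • y})
    (hAX : Submodule.span K {z : X | ∃ a' ∈ Af j, ∃ x ∈ X₀, z = a' • x} ≤
      Submodule.span K {z : X | ∃ b ∈ Bf (c * j), ∃ x ∈ X₀, z = MulOpposite.op b • x}) :
    (1 : B) ∈ Bf (c * j + d) *
      Submodule.span K {z : B | ∃ y ∈ Y₀, ∃ x ∈ X₀, z = ν (MulOpposite.op a • y) x} *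
      Bf (c * j + d) := by
  rw [span_setOf_apply_eq_map₂] at h1B
  rw [span_setOf_op_smul_eq_map₂_twistedPairing hνbal]
  have key := map₂_le_mul_map₂_twistedPairing_mul hνl hνr hνbal Y₀ X₀ h1A hYA hAX
  refine SetLike.le_def.mp ?_ h1B
  calc Bf d * map₂ ν Y₀ X₀ * Bf d
      ≤ Bf d * (Bf (c * j) * map₂ (twistedPairing ν a) Y₀ X₀ * Bf (c * j)) * Bf d := by gcongr
    _ = Bf d * Bf (c * j) * map₂ (twistedPairing ν a) Y₀ X₀ * (Bf (c * j) * Bf d) := by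
      simp only [mul_assoc]
    _ ≤ Bf (c * j + d) * map₂ (twistedPairing ν a) Y₀ X₀ * Bf (c * j + d) := by
      gcongr
      · exact add_comm d (c * j) ▸ hBmul d (c * j)
      · exact hBmul (c * j) d

/-- In a Morita context `(A, X; Y, B)` with filtrations `{Aᵢ}` on `A` and `{Bᵢ}`
on `B` and finite-dimensional generating subspaces `X₀ ⊆ X`, `Y₀ ⊆ Y`: if
`1_B ∈ B_d Y₀ X₀ B_d`, and for a nonzero `a ∈ A` one has `1_A ∈ A_j a A_j`, and
`Y₀ A_j ⊆ B_{cj} Y₀` and `A_j X₀ ⊆ X₀ B_{cj}`, then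
`1_B ∈ B_{cj+d} Y₀ a X₀ B_{cj+d}` (products of subspaces denote `K`-spans). -/
theorem one_mem_filtration_pairing
    (K A B X Y : Type*) [Field K] [Ring A] [Algebra K A] [Ring B] [Algebra K B]
    [AddCommGroup X] [Module K X] [Module A X] [IsScalarTower K A X]
    [Module Bᵐᵒᵖ X] [SMulCommClass K Bᵐᵒᵖ X]
    [AddCommGroup Y] [Module K Y] [Module B Y] [IsScalarTower K B Y]
    [Module Aᵐᵒᵖ Y] [SMulCommClass K Aᵐᵒᵖ Y]
    (ν : Y →ₗ[K] X →ₗ[K] B)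
    (hνl : ∀ (b : B) (y : Y) (x : X), ν (b • y) x = b * ν y x)
    (hνr : ∀ (b : B) (y : Y) (x : X), ν y (MulOpposite.op b • x) = ν y x * b)
    (hνbal : ∀ (a : A) (y : Y) (x : X), ν (MulOpposite.op a • y) x = ν y (a • x))
    (Af : ℕ → Submodule K A) (Bf : ℕ → Submodule K B)
    (hAmul : ∀ i j, Af i * Af j ≤ Af (i + j))
    (hBmul : ∀ i j, Bf i * Bf j ≤ Bf (i + j))
    (hAmono : Monotone Af) (hBmono : Monotone Bf)
    (X₀ : Submodule K X) (Y₀ : Submodule K Y)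
    (c d j : ℕ) (a : A) (ha : a ≠ 0)
    (h1B : (1 : B) ∈ Bf d * Submodule.span K {z : B | ∃ y ∈ Y₀, ∃ x ∈ X₀, z = ν y x} * Bf d)
    (h1A : (1 : A) ∈ Af j * Submodule.span K {a} * Af j)
    (hYA : Submodule.span K {z : Y | ∃ a' ∈ Af j, ∃ y ∈ Y₀, z = MulOpposite.op a' • y} ≤
      Submodule.span K {z : Y | ∃ b ∈ Bf (c * j), ∃ y ∈ Y₀, z = b • y})
    (hAX : Submodule.span K {z : X | ∃ a' ∈ Af j, ∃ x ∈ X₀, z = a' • x} ≤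
      Submodule.span K {z : X | ∃ b ∈ Bf (c * j), ∃ x ∈ X₀, z = MulOpposite.op b • x}) :
    (1 : B) ∈ Bf (c * j + d) *
      Submodule.span K {z : B | ∃ y ∈ Y₀, ∃ x ∈ X₀, z = ν (MulOpposite.op a • y) x} *
      Bf (c * j + d) :=
  one_mem_filtration_pairing_general K A B X Y ν hνl hνr hνbal Af Bf hBmul X₀ Y₀ c d j a h1B h1A hYA
    hAX
end
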